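/- arXiv:2411.03117 — 7 statements merged into one kernel-verified Lean document; each statement's English description precedes it below -/
import Mathlib

section
/- Let n ≥ 1, let λ ∈ Z_{≥0}^n be a composition and let d ≥ 1. Call a pair of sequences (c₁ < c₂ < … < c_d of positive integers; j₁,…,j_d ∈ {1,…,n}) AQ-admissible for (λ,d) if, setting μ^{(0)} = λ and μ^{(a)} = μ^{(a−1)} + 1_{j_a} (the composition obtained by increasing the j_a-th entry by 1), one has for every a = 1,…,d: c_a − 1 ∈ {λ₁,…,λ_n} ∪ {c_{a−1}} (for a = 1 just c₁ − 1 ∈ {λ₁,…,λ_n}), there exists an index j with μ^{(a−1)}_j = c_a − 1, and j_a is the largest such index. Then a composition μ ∈ Z_{≥0}^n is equal to μ^{(d)} for some AQ-admissible pair if and only if μ ∈ Ser^n_{d,λ}; moreover each μ ∈ Ser^n_{d,λ} arises from exactly one AQ-admissible pair. -/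
/-- The set `Ser^n_{d,λ}` of `d`-serpentines associated with a composition
`λ ∈ Z_{≥0}^n` (Definition 1.1, 0-based indexing). -/
def SerpF {n : ℕ} (d : ℕ) (lam mu : Fin n → ℕ) : Prop :=
  (∀ i, lam i ≤ mu i) ∧
  (∑ i, (mu i - lam i)) = d ∧
  (∀ i j : Fin n, i < j → lam i ≤ lam j → mu i ≤ lam j) ∧
  (∀ i j : Fin n, i < j → lam j < lam i → lam i ≤ mu j → mu i = lam i)

/-- `muUpTo lam J a` is the composition `μ⁽ᵃ⁾ = λ + 1_{j₁} + … + 1_{j_a}` obtained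
from `λ` after the first `a` steps of the process recorded by `J` (0-based: the
steps performed are those of index `b` with `b < a`). -/
def muUpTo {n d : ℕ} (lam : Fin n → ℕ) (J : Fin d → Fin n) (a : ℕ) (i : Fin n) : ℕ :=
  lam i + ((Finset.univ : Finset (Fin d)).filter (fun b : Fin d => b.val < a ∧ J b = i)).card

/-- An AQ-admissible pair for `(λ, d)`: a strictly increasing sequence of positive
integers `c₁ < … < c_d` together with indices `j₁, …, j_d` such that, setting
`μ⁽⁰⁾ = λ` and `μ⁽ᵃ⁾ = μ⁽ᵃ⁻¹⁾ + 1_{j_a}`, for every step `a` one has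
`c_a − 1 ∈ {λ₁,…,λ_n} ∪ {c_{a−1}}` (for the first step just `c₁ − 1 ∈ {λᵢ}`),
`μ⁽ᵃ⁻¹⁾_{j_a} = c_a − 1`, and `j_a` is the largest index with this property. -/
def AQAdmissible {n d : ℕ} (lam : Fin n → ℕ) (c : Fin d → ℕ) (J : Fin d → Fin n) : Prop :=
  (∀ a, 0 < c a) ∧ StrictMono c ∧
  ∀ a : Fin d,
    ((∃ i, lam i = c a - 1) ∨ ∃ b : Fin d, (b : ℕ) + 1 = (a : ℕ) ∧ c b = c a - 1) ∧
    muUpTo lam J (a : ℕ) (J a) = c a - 1 ∧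
    (∀ i, muUpTo lam J (a : ℕ) i = c a - 1 → i ≤ J a)

/-!
Record an AQ-admissible pair by the boxes it adds to `λ`: step `a` puts a box in row `J a`,
column `c a`. Because `c` increases and each step extends a row of length `c a - 1`, the columns
filled in row `i` are exactly `λ i + 1, …, μ i`, so `c` is the increasing enumeration of the
disjoint union of the intervals `(λ i, μ i]`, and `J a` is the row whose interval contains `c a`.
This pins down the pair, and it gives the closed form
`μ⁽ᵃ⁾ i = max (λ i) (min (μ i) (c a - 1))` for the intermediate compositions. In this closed
form the maximality of `J a` says exactly that for `i < j` no column of `(λ i, μ i]` lies in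
`(λ j, μ j + 1]`, which is a reformulation of the serpentine conditions (iii) and (iv).
-/

open Finset Function

variable {n d : ℕ}

theorem disjoint_Ioc_Ioc_succ_iff {a b c e : ℕ} (hab : a ≤ b) (hce : c ≤ e) :
    Disjoint (Ioc a b) (Ioc c (e + 1)) ↔ (a ≤ c → b ≤ c) ∧ (c < a → a ≤ e → b = a) := by
  rw [Finset.Ioc_disjoint_Ioc]
  omega

theorem serpF_iff (lam mu : Fin n → ℕ) :
    SerpF d lam mu ↔ (∀ i, lam i ≤ mu i) ∧ ∑ i, (mu i - lam i) = d ∧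
      ∀ i j, i < j → Disjoint (Ioc (lam i) (mu i)) (Ioc (lam j) (mu j + 1)) := by
  constructor
  · rintro ⟨hle, hsum, hlow, hhigh⟩
    exact ⟨hle, hsum, fun i j hij =>
      (disjoint_Ioc_Ioc_succ_iff (hle i) (hle j)).2 ⟨hlow i j hij, hhigh i j hij⟩⟩
  · rintro ⟨hle, hsum, hdisj⟩
    have h i j (hij : i < j) := (disjoint_Ioc_Ioc_succ_iff (hle i) (hle j)).1 (hdisj i j hij)
    exact ⟨hle, hsum, fun i j hij => (h i j hij).1, fun i j hij => (h i j hij).2⟩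

section muUpTo

variable (lam : Fin n → ℕ) (J : Fin d → Fin n)

theorem le_muUpTo (a : ℕ) (i : Fin n) : lam i ≤ muUpTo lam J a i :=
  Nat.le_add_right _ _

theorem muUpTo_final (i : Fin n) : muUpTo lam J d i = lam i + #{b | J b = i} := by
  simp only [muUpTo, Fin.is_lt, true_and]

theorem muUpTo_lt_muUpTo_of_lt {a : ℕ} (b : Fin d) (hb : (b : ℕ) < a) :
    muUpTo lam J b (J b) < muUpTo lam J a (J b) := by
  refine Nat.add_lt_add_left (card_lt_card ?_) _
  refine (ssubset_iff_of_subset fun x hx => ?_).2 ⟨b, by simp [hb], by simp⟩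
  simp only [mem_filter, mem_univ, true_and] at hx ⊢
  exact ⟨hx.1.trans hb, hx.2⟩

theorem muUpTo_eq_of_strictMono {c : Fin d → ℕ} (hc : StrictMono c) (a : Fin d) (i : Fin n) :
    muUpTo lam J a i = lam i + #{v ∈ image c {b | J b = i} | v < c a} := by
  rw [muUpTo, filter_image, card_image_of_injective _ hc.injective, filter_filter]
  simp only [hc.lt_iff_lt, Fin.lt_def, and_comm]

end muUpTo

/-- Step `a` adds the box in row `J a` and column `c a`, the columns increasing with `a`, and the
boxes added are those of the skew shape `μ / λ`. -/
def IsColumnEnumeration (lam mu : Fin n → ℕ) (c : Fin d → ℕ) (J : Fin d → Fin n) : Prop :=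
  StrictMono c ∧ ∀ i, image c {b | J b = i} = Ioc (lam i) (mu i)

namespace IsColumnEnumeration

variable {lam mu : Fin n → ℕ} {c : Fin d → ℕ} {J : Fin d → Fin n}

theorem mem_Ioc_iff (h : IsColumnEnumeration lam mu c J) (a : Fin d) (i : Fin n) :
    c a ∈ Ioc (lam i) (mu i) ↔ J a = i := by
  rw [← h.2 i, h.1.injective.mem_finset_image]
  simp

theorem exists_eq (h : IsColumnEnumeration lam mu c J) {i : Fin n} {v : ℕ}
    (hv : v ∈ Ioc (lam i) (mu i)) : ∃ a, J a = i ∧ c a = v := by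
  rw [← h.2 i] at hv
  simpa using hv

theorem range_eq (h : IsColumnEnumeration lam mu c J) :
    Set.range c = {v | ∃ i, v ∈ Ioc (lam i) (mu i)} := by
  ext v
  constructor
  · rintro ⟨a, rfl⟩
    exact ⟨J a, (h.mem_Ioc_iff a _).2 rfl⟩
  · rintro ⟨i, hv⟩
    obtain ⟨a, -, rfl⟩ := h.exists_eq hv
    exact ⟨a, rfl⟩

theorem unique {c' : Fin d → ℕ} {J' : Fin d → Fin n} (h : IsColumnEnumeration lam mu c J)
    (h' : IsColumnEnumeration lam mu c' J') : c = c' ∧ J = J' := by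
  have hc : c = c' := (h.1.range_inj h'.1).1 (h.range_eq.trans h'.range_eq.symm)
  subst hc
  exact ⟨rfl, funext fun a => (h.mem_Ioc_iff a _).1 ((h'.mem_Ioc_iff a _).2 rfl)⟩

theorem sum_eq (h : IsColumnEnumeration lam mu c J) : ∑ i, (mu i - lam i) = d := by
  calc ∑ i, (mu i - lam i) = ∑ i, #(image c {b | J b = i}) := by simp only [h.2, Nat.card_Ioc]
    _ = ∑ i, #{b | J b = i} := by simp only [card_image_of_injective _ h.1.injective]
    _ = d := by rw [← card_eq_sum_card_fiberwise fun b _ => mem_univ (J b), card_univ,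
                  Fintype.card_fin]

theorem muUpTo_final (h : IsColumnEnumeration lam mu c J) (hle : ∀ i, lam i ≤ mu i) :
    muUpTo lam J d = mu := by
  funext i
  rw [_root_.muUpTo_final, ← card_image_of_injective _ h.1.injective, h.2 i, Nat.card_Ioc]
  exact Nat.add_sub_cancel' (hle i)

theorem muUpTo_eq (h : IsColumnEnumeration lam mu c J) (a : Fin d) (i : Fin n) :
    muUpTo lam J a i = lam i + (min (mu i) (c a - 1) - lam i) := by
  rw [muUpTo_eq_of_strictMono lam J h.1, h.2 i, ← Nat.card_Ioc]
  congr 2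
  ext v
  simp only [mem_filter, mem_Ioc]
  omega

theorem chain (h : IsColumnEnumeration lam mu c J) (a : Fin d) :
    (∃ i, lam i = c a - 1) ∨ ∃ b : Fin d, (b : ℕ) + 1 = a ∧ c b = c a - 1 := by
  have hca := (h.mem_Ioc_iff a (J a)).2 rfl
  rw [mem_Ioc] at hca
  by_cases hbot : lam (J a) = c a - 1
  · exact .inl ⟨J a, hbot⟩
  obtain ⟨b, -, hb⟩ := h.exists_eq (i := J a) (v := c a - 1) (mem_Ioc.2 ⟨by omega, by omega⟩)
  refine .inr ⟨b, ?_, hb⟩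
  have hba : b < a := h.1.lt_iff_lt.1 (by omega)
  by_contra hne
  have hnext : (b : ℕ) + 1 < a := by rw [Fin.lt_def] at hba; omega
  have h1 : c b < c ⟨b + 1, hnext.trans a.is_lt⟩ := h.1 (Fin.lt_def.2 (Nat.lt_succ_self _))
  have h2 : c ⟨b + 1, hnext.trans a.is_lt⟩ < c a := h.1 (Fin.lt_def.2 hnext)
  omega

theorem aqAdmissible_iff (h : IsColumnEnumeration lam mu c J) (hle : ∀ i, lam i ≤ mu i) :
    AQAdmissible lam c J ↔
      ∀ i j, i < j → Disjoint (Ioc (lam i) (mu i)) (Ioc (lam j) (mu j + 1)) := by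
  have hcol (a : Fin d) : c a ∈ Ioc (lam (J a)) (mu (J a)) := (h.mem_Ioc_iff a _).2 rfl
  have hreach (a : Fin d) (j : Fin n) :
      muUpTo lam J a j = c a - 1 ↔ c a ∈ Ioc (lam j) (mu j + 1) := by
    rw [h.muUpTo_eq, mem_Ioc]
    have := hle j
    have := (mem_Ioc.1 (hcol a)).1
    omega
  constructor
  · rintro ⟨-, -, hstep⟩ i j hij
    refine disjoint_left.2 fun v hvi hvj => ?_
    obtain ⟨a, rfl, rfl⟩ := h.exists_eq hvi
    exact absurd ((hstep a).2.2 j ((hreach a j).2 hvj)) (not_le.2 hij)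
  · intro hdisj
    refine ⟨fun a => (mem_Ioc.1 (hcol a)).1.trans_le' (Nat.zero_le _), h.1, fun a =>
      ⟨h.chain a, (hreach a _).2 (Ioc_subset_Ioc_right (Nat.le_succ _) (hcol a)), fun j hj => ?_⟩⟩
    by_contra hlt
    exact disjoint_left.1 (hdisj _ _ (not_le.1 hlt)) (hcol a) ((hreach a j).1 hj)

end IsColumnEnumeration

theorem exists_isColumnEnumeration {lam mu : Fin n → ℕ}
    (hdisj : Pairwise (Disjoint on fun i => Ioc (lam i) (mu i)))
    (hsum : ∑ i, (mu i - lam i) = d) :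
    ∃ c J, IsColumnEnumeration lam mu (d := d) c J := by
  classical
  set S := univ.biUnion fun i => Ioc (lam i) (mu i)
  have hcard : #S = d := by
    rw [card_biUnion fun i _ j _ hij => hdisj hij, ← hsum]
    simp only [Nat.card_Ioc]
  let c := S.orderEmbOfFin hcard
  have hrow a : ∃ i, c a ∈ Ioc (lam i) (mu i) := by
    simpa only [S, mem_biUnion, mem_univ, true_and] using S.orderEmbOfFin_mem hcard a
  choose J hJ using hrow
  have hrow_unique a i (hi : c a ∈ Ioc (lam i) (mu i)) : J a = i := by
    by_contra hne
    exact disjoint_left.1 (hdisj hne) (hJ a) hi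
  refine ⟨c, J, c.strictMono, fun i => subset_antisymm ?_ fun v hv => ?_⟩
  · rintro _ hv
    obtain ⟨a, ha, rfl⟩ := mem_image.1 hv
    exact (mem_filter.1 ha).2 ▸ hJ a
  · have hvS : v ∈ Set.range c := by
      rw [range_orderEmbOfFin]
      exact mem_coe.2 (mem_biUnion.2 ⟨i, mem_univ _, hv⟩)
    obtain ⟨a, rfl⟩ := hvS
    exact mem_image.2 ⟨a, by simp [hrow_unique a i hv], rfl⟩

theorem AQAdmissible.isColumnEnumeration {lam : Fin n → ℕ} {c : Fin d → ℕ} {J : Fin d → Fin n}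
    (h : AQAdmissible lam c J) : IsColumnEnumeration lam (muUpTo lam J d) c J := by
  obtain ⟨hpos, hc, hstep⟩ := h
  refine ⟨hc, fun i => eq_of_subset_of_card_le (fun v hv => ?_) ?_⟩
  · obtain ⟨b, hb, rfl⟩ := mem_image.1 hv
    obtain rfl := (mem_filter.1 hb).2
    have hlt := muUpTo_lt_muUpTo_of_lt lam J b b.is_lt
    have := (hstep b).2.1
    have := le_muUpTo lam J b (J b)
    have := hpos b
    exact mem_Ioc.2 ⟨by omega, by omega⟩
  · rw [Nat.card_Ioc, muUpTo_final, card_image_of_injective _ hc.injective]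
    omega

theorem AQAdmissible.serpF {lam : Fin n → ℕ} {c : Fin d → ℕ} {J : Fin d → Fin n}
    (h : AQAdmissible lam c J) : SerpF d lam (muUpTo lam J d) := by
  have henum := h.isColumnEnumeration
  have hle := le_muUpTo lam J d
  exact (serpF_iff _ _).2 ⟨hle, henum.sum_eq, (henum.aqAdmissible_iff hle).1 h⟩

theorem SerpF.exists_aqAdmissible {lam mu : Fin n → ℕ} (hs : SerpF d lam mu) :
    ∃ (c : Fin d → ℕ) (J : Fin d → Fin n), AQAdmissible lam c J ∧ mu = muUpTo lam J d := by
  obtain ⟨hle, hsum, hdisj⟩ := (serpF_iff lam mu).1 hs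
  have hpair : Pairwise (Disjoint on fun i => Ioc (lam i) (mu i)) := by
    intro i j hne
    rcases hne.lt_or_gt with hij | hji
    · exact (hdisj i j hij).mono_right (Ioc_subset_Ioc_right (Nat.le_succ _))
    · exact ((hdisj j i hji).mono_right (Ioc_subset_Ioc_right (Nat.le_succ _))).symm
  obtain ⟨c, J, henum⟩ := exists_isColumnEnumeration hpair hsum
  exact ⟨c, J, (henum.aqAdmissible_iff hle).2 hdisj, (henum.muUpTo_final hle).symm⟩

theorem AQ_pairs_are_serpentines_general {n d : ℕ}
    (lam mu : Fin n → ℕ) :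
    ((∃ (c : Fin d → ℕ) (J : Fin d → Fin n),
        AQAdmissible lam c J ∧ mu = muUpTo lam J d) ↔ SerpF d lam mu) ∧
    (SerpF d lam mu →
      ∃! p : (Fin d → ℕ) × (Fin d → Fin n),
        AQAdmissible lam p.1 p.2 ∧ mu = muUpTo lam p.2 d) := by
  refine ⟨⟨fun ⟨c, J, h, hmu⟩ => hmu ▸ h.serpF, SerpF.exists_aqAdmissible⟩, fun hs => ?_⟩
  obtain ⟨c, J, h, hmu⟩ := hs.exists_aqAdmissible
  refine ⟨(c, J), ⟨h, hmu⟩, fun ⟨c', J'⟩ ⟨h', hmu'⟩ => ?_⟩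
  have henum : IsColumnEnumeration lam mu c J := hmu ▸ h.isColumnEnumeration
  have henum' : IsColumnEnumeration lam mu c' J' := hmu' ▸ h'.isColumnEnumeration
  exact Prod.ext_iff.2 (henum'.unique henum)

/-- Proposition 1.2.  A composition `μ` equals `μ⁽ᵈ⁾` for some
AQ-admissible pair if and only if `μ ∈ Ser^n_{d,λ}`; moreover each serpentine
arises from exactly one AQ-admissible pair. -/
theorem AQ_pairs_are_serpentines {n d : ℕ} (hn : 1 ≤ n) (hd : 1 ≤ d)
    (lam mu : Fin n → ℕ) :
    ((∃ (c : Fin d → ℕ) (J : Fin d → Fin n),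
        AQAdmissible lam c J ∧ mu = muUpTo lam J d) ↔ SerpF d lam mu) ∧
    (SerpF d lam mu →
      ∃! p : (Fin d → ℕ) × (Fin d → Fin n),
        AQAdmissible lam p.1 p.2 ∧ mu = muUpTo lam p.2 d) :=
  AQ_pairs_are_serpentines_general lam mu
end

section
/- Let λ ∈ Z_{≥0}^n be a composition and d ≥ 0. If μ ∈ Ser^n_{d,λ}, then μ₊ ≥ (λ,d)₊ in the dominance order. -/
/-- A composition of length `nn` is encoded as a function `ℕ → ℕ` vanishing from
index `nn` on (0-based indexing).  `IsSerpentine nn d lam mu` says that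
`mu ∈ Ser^nn_{d,lam}` is a `d`-serpentine associated with `lam`. -/
def IsSerpentine (nn d : ℕ) (lam mu : ℕ → ℕ) : Prop :=
  (∀ i, nn ≤ i → lam i = 0) ∧
  (∀ i, nn ≤ i → mu i = 0) ∧
  (∀ i, lam i ≤ mu i) ∧
  (∑ i ∈ Finset.range nn, (mu i - lam i)) = d ∧
  (∀ i j, i < j → j < nn → lam i ≤ lam j → mu i ≤ lam j) ∧
  (∀ i j, i < j → j < nn → lam j < lam i → lam i ≤ mu j → mu i = lam i)

/-- `domSum f s` is the sum of the `s` largest entries of a (finitely supported)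
function `f : ℕ → ℕ`, i.e. the `s`-th partial sum of the dominant part `f₊`. -/
noncomputable def domSum (f : ℕ → ℕ) (s : ℕ) : ℕ :=
  sSup ((fun T : Finset ℕ => ∑ i ∈ T, f i) '' {T : Finset ℕ | T.card ≤ s})

/-- `f₊ = g₊`: the dominant parts (non-increasing reorderings, padded by trailing
zeros) of the finitely supported functions `f` and `g` coincide. -/
def DomEq (f g : ℕ → ℕ) : Prop := ∀ s, domSum f s = domSum g s

/-- `f₊ ≤ g₊` in the dominance order: `|f| = |g|` and every partial sum of the
dominant part of `g` is at least the corresponding one for `f`. -/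
def DomLE (f g : ℕ → ℕ) : Prop :=
  (∀ s, domSum f s ≤ domSum g s) ∧ ∃ N, ∀ s, N ≤ s → domSum f s = domSum g s

/-- The composition `(λ, d)`: append the entry `d` to a length-`n` composition. -/
def appendComp (n : ℕ) (lam : ℕ → ℕ) (d : ℕ) : ℕ → ℕ :=
  fun i => if i < n then lam i else if i = n then d else 0

/-- The composition `(d₁, …, d_m)`: truncate `d` to its first `m` entries. -/
def truncComp (m : ℕ) (d : ℕ → ℕ) : ℕ → ℕ := fun i => if i < m then d i else 0

/-- A chain of iterated serpentines `μ⁽⁰⁾ = (0)`, `μ⁽ʲ⁾ ∈ Ser^{n_j}_{d_j, μ⁽ʲ⁻¹⁾}`. -/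
def SerpChain (n : ℕ → ℕ) (m : ℕ) (d : ℕ → ℕ) (μ : ℕ → ℕ → ℕ) : Prop :=
  (∀ i, μ 0 i = 0) ∧ ∀ j, j < m → IsSerpentine (n j) (d j) (μ j) (μ (j + 1))

/-- `d̄ ∈ Z_{≥0}^m` is `n̄`-admissible: for each `s < m` the number of nonzero
entries among `d_0, …, d_s` is at most `n_s`. -/
def NAdmissible (n : ℕ → ℕ) (m : ℕ) (d : ℕ → ℕ) : Prop :=
  ∀ s, s < m → ((Finset.range (s + 1)).filter (fun j => d j ≠ 0)).card ≤ n s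

/- ### Auxiliary lemmas -/

lemma domSum_set_nonempty (f : ℕ → ℕ) (s : ℕ) :
    ((fun T : Finset ℕ => ∑ i ∈ T, f i) '' {T : Finset ℕ | T.card ≤ s}).Nonempty :=
  ⟨0, ∅, by simp⟩

lemma sum_le_of_support (f : ℕ → ℕ) (N : ℕ) (hf : ∀ i, N ≤ i → f i = 0) (T : Finset ℕ) :
    ∑ i ∈ T, f i ≤ ∑ i ∈ Finset.range N, f i := by
  classical
  have h1 : ∑ i ∈ T, f i = ∑ i ∈ T.filter (· ∈ Finset.range N), f i := by
    rw [Finset.sum_filter_of_ne]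
    intro x _ hx
    simp only [Finset.mem_range]
    by_contra hc
    exact hx (hf x (not_lt.mp hc))
  rw [h1]
  exact Finset.sum_le_sum_of_subset (fun x hx => (Finset.mem_filter.mp hx).2)

lemma domSum_le {f : ℕ → ℕ} {s C : ℕ}
    (h : ∀ T : Finset ℕ, T.card ≤ s → ∑ i ∈ T, f i ≤ C) : domSum f s ≤ C :=
  csSup_le (domSum_set_nonempty f s) (by rintro x ⟨T, hT, rfl⟩; exact h T hT)

lemma le_domSum {f : ℕ → ℕ} (N : ℕ) (hf : ∀ i, N ≤ i → f i = 0) {s : ℕ}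
    (T : Finset ℕ) (hT : T.card ≤ s) : ∑ i ∈ T, f i ≤ domSum f s :=
  le_csSup ⟨∑ i ∈ Finset.range N, f i, by
    rintro x ⟨T', _, rfl⟩; exact sum_le_of_support f N hf T'⟩ ⟨T, hT, rfl⟩

lemma domSum_eq_total {f : ℕ → ℕ} (N : ℕ) (hf : ∀ i, N ≤ i → f i = 0) {s : ℕ}
    (hs : N ≤ s) : domSum f s = ∑ i ∈ Finset.range N, f i := by
  refine le_antisymm (domSum_le fun T _ => sum_le_of_support f N hf T) ?_
  exact le_domSum N hf (Finset.range N) (by simpa using hs)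

lemma serp_disj_aux (n : ℕ) (lam mu : ℕ → ℕ)
    (h5 : ∀ i j, i < j → j < n → lam i ≤ lam j → mu i ≤ lam j)
    (h6 : ∀ i j, i < j → j < n → lam j < lam i → lam i ≤ mu j → mu i = lam i)
    {i j : ℕ} (hij : i < j) (hjn : j < n) (hi : lam i < mu i) :
    Disjoint (Finset.Ioc (lam i) (mu i)) (Finset.Ioc (lam j) (mu j)) := by
  rcases le_or_gt (lam i) (lam j) with hll | hll
  · have hkey := h5 i j hij hjn hll
    rw [Finset.disjoint_left]
    intro t ht ht'
    rw [Finset.mem_Ioc] at ht ht'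
    omega
  · have hkey : mu j < lam i := by
      by_contra hc
      exact hi.ne' (h6 i j hij hjn hll (le_of_not_gt hc))
    rw [Finset.disjoint_left]
    intro t ht ht'
    rw [Finset.mem_Ioc] at ht ht'
    omega

/-- Key combinatorial lemma: the intervals `(λⱼ, μⱼ]` are pairwise disjoint,
hence the total increment over any set `B` is at most the maximum of `μ` on `B`. -/
lemma serp_key (n : ℕ) (lam mu : ℕ → ℕ)
    (h5 : ∀ i j, i < j → j < n → lam i ≤ lam j → mu i ≤ lam j)
    (h6 : ∀ i j, i < j → j < n → lam j < lam i → lam i ≤ mu j → mu i = lam i)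
    (B : Finset ℕ) (hB : B ⊆ Finset.range n) (M : ℕ) (hM : ∀ j ∈ B, mu j ≤ M) :
    ∑ j ∈ B, (mu j - lam j) ≤ M := by
  classical
  have hdisj : ∀ i ∈ B, ∀ j ∈ B, i ≠ j →
      Disjoint (Finset.Ioc (lam i) (mu i)) (Finset.Ioc (lam j) (mu j)) := by
    intro i hi j hj hne
    rcases le_or_gt (mu i) (lam i) with hii | hii
    · simp [Finset.Ioc_eq_empty (not_lt.mpr hii)]
    rcases le_or_gt (mu j) (lam j) with hjj | hjj
    · simp [Finset.Ioc_eq_empty (not_lt.mpr hjj)]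
    rcases hne.lt_or_gt with hlt | hlt
    · exact serp_disj_aux n lam mu h5 h6 hlt (Finset.mem_range.mp (hB hj)) hii
    · exact (serp_disj_aux n lam mu h5 h6 hlt (Finset.mem_range.mp (hB hi)) hjj).symm
  calc ∑ j ∈ B, (mu j - lam j)
      = ∑ j ∈ B, (Finset.Ioc (lam j) (mu j)).card := by simp [Nat.card_Ioc]
    _ = (B.biUnion fun j => Finset.Ioc (lam j) (mu j)).card :=
        (Finset.card_biUnion hdisj).symm
    _ ≤ (Finset.Icc 1 M).card := by
        apply Finset.card_le_card
        intro t ht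
        obtain ⟨j, hj, htj⟩ := Finset.mem_biUnion.mp ht
        rw [Finset.mem_Ioc] at htj
        exact Finset.mem_Icc.mpr ⟨by omega, le_trans htj.2 (hM j hj)⟩
    _ = M := by rw [Nat.card_Icc]; omega

/-- Lemma 1.5.  If `μ ∈ Ser^n_{d,λ}`, then `μ₊ ≥ (λ,d)₊` in the
dominance order. -/
theorem serpentine_dominant_weight_inequality (n d : ℕ) (lam mu : ℕ → ℕ)
    (h : IsSerpentine n d lam mu) :
    DomLE (appendComp n lam d) mu := by
  classical
  obtain ⟨hl0, hm0, hle, hsum, h5, h6⟩ := h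
  have hmusum : ∑ i ∈ Finset.range n, mu i = (∑ i ∈ Finset.range n, lam i) + d := by
    rw [← hsum, ← Finset.sum_add_distrib]
    exact Finset.sum_congr rfl fun i _ => (Nat.add_sub_cancel' (hle i)).symm
  have happ0 : ∀ i, n + 1 ≤ i → appendComp n lam d i = 0 := by
    intro i hi; unfold appendComp; rw [if_neg (by omega), if_neg (by omega)]
  have happsum : ∑ i ∈ Finset.range (n + 1), appendComp n lam d i
      = (∑ i ∈ Finset.range n, lam i) + d := by
    rw [Finset.sum_range_succ]
    congr 1
    · exact Finset.sum_congr rfl fun i hi => by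
        unfold appendComp; rw [if_pos (Finset.mem_range.mp hi)]
    · unfold appendComp; simp
  constructor
  · intro s
    apply domSum_le
    intro T hT
    set S₀ : Finset ℕ := T ∩ Finset.range n with hS₀def
    have hS₀sub : S₀ ⊆ Finset.range n := Finset.inter_subset_right
    have hS₀T : S₀ ⊆ T := Finset.inter_subset_left
    have hmuS₀ : ∑ i ∈ S₀, mu i = (∑ i ∈ S₀, lam i) + ∑ i ∈ S₀, (mu i - lam i) := by
      rw [← Finset.sum_add_distrib]
      exact Finset.sum_congr rfl fun i _ => (Nat.add_sub_cancel' (hle i)).symm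
    by_cases hnT : n ∈ T
    · -- ∑_T app = ∑_{S₀} lam + d
      have hnS₀ : n ∉ S₀ := fun hc => by
        have := Finset.mem_range.mp (hS₀sub hc); omega
      have happT : ∑ i ∈ T, appendComp n lam d i = (∑ i ∈ S₀, lam i) + d := by
        have hsub : insert n S₀ ⊆ T := by
          intro x hx
          rcases Finset.mem_insert.mp hx with rfl | hx
          · exact hnT
          · exact hS₀T hx
        rw [← Finset.sum_subset hsub (by
          intro x hxT hx
          have hxn : x ≠ n := fun hc => hx (hc ▸ Finset.mem_insert_self n S₀)
          have hxge : ¬ x < n := fun hc =>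
            hx (Finset.mem_insert_of_mem (Finset.mem_inter.mpr ⟨hxT, Finset.mem_range.mpr hc⟩))
          unfold appendComp
          rw [if_neg hxge, if_neg hxn])]
        rw [Finset.sum_insert hnS₀]
        have h1 : appendComp n lam d n = d := by unfold appendComp; simp
        have h2 : ∑ i ∈ S₀, appendComp n lam d i = ∑ i ∈ S₀, lam i :=
          Finset.sum_congr rfl fun i hi => by
            unfold appendComp; rw [if_pos (Finset.mem_range.mp (hS₀sub hi))]
        rw [h1, h2, Nat.add_comm]
      rw [happT]
      -- card bound : card S₀ + 1 ≤ card T ≤ s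
      have hcard : S₀.card + 1 ≤ s := by
        have h1 : S₀ ⊆ T.erase n := fun x hx =>
          Finset.mem_erase.mpr ⟨fun hc => hnS₀ (hc ▸ hx), hS₀T hx⟩
        have h2 := Finset.card_le_card h1
        have h3 := Finset.card_erase_of_mem hnT
        have h4 : 1 ≤ T.card := Finset.card_pos.mpr ⟨n, hnT⟩
        omega
      set A : Finset ℕ := (Finset.range n).filter (fun i => lam i < mu i) with hAdef
      have hAsubR : A ⊆ Finset.range n := by
        rw [hAdef]; exact Finset.filter_subset _ _
      have hdA : ∑ j ∈ A, (mu j - lam j) = d := by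
        rw [← hsum]
        apply Finset.sum_subset hAsubR
        intro x hx hnx
        have hnlt : ¬ lam x < mu x := fun hc => hnx (by
          rw [hAdef]; exact Finset.mem_filter.mpr ⟨hx, hc⟩)
        omega
      by_cases hAS : (A \ S₀).Nonempty
      · obtain ⟨i₀, hi₀, hmax⟩ := Finset.exists_max_image (A \ S₀) mu hAS
        have hi₀S₀ : i₀ ∉ S₀ := (Finset.mem_sdiff.mp hi₀).2
        have hbound : ∑ j ∈ A \ S₀, (mu j - lam j) ≤ mu i₀ :=
          serp_key n lam mu h5 h6 (A \ S₀)
            (fun x hx => hAsubR (Finset.mem_sdiff.mp hx).1)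
            (mu i₀) hmax
        have hsplit : ∑ j ∈ A ∩ S₀, (mu j - lam j) + ∑ j ∈ A \ S₀, (mu j - lam j) = d := by
          rw [Finset.sum_inter_add_sum_sdiff]; exact hdA
        have hsubsum : ∑ j ∈ A ∩ S₀, (mu j - lam j) ≤ ∑ j ∈ S₀, (mu j - lam j) :=
          Finset.sum_le_sum_of_subset Finset.inter_subset_right
        have hTsum : ∑ i ∈ insert i₀ S₀, mu i
            = mu i₀ + ((∑ i ∈ S₀, lam i) + ∑ i ∈ S₀, (mu i - lam i)) := by
          rw [Finset.sum_insert hi₀S₀, hmuS₀]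
        have hfinal : (∑ i ∈ S₀, lam i) + d ≤ ∑ i ∈ insert i₀ S₀, mu i := by
          rw [hTsum]; omega
        refine le_trans hfinal (le_domSum n hm0 _ ?_)
        calc (insert i₀ S₀).card ≤ S₀.card + 1 := Finset.card_insert_le _ _
          _ ≤ s := hcard
      · -- A ⊆ S₀
        have hAsub : A ⊆ S₀ := fun x hx => by
          by_contra hc
          exact hAS ⟨x, Finset.mem_sdiff.mpr ⟨hx, hc⟩⟩
        have hdle : d ≤ ∑ j ∈ S₀, (mu j - lam j) := by
          rw [← hdA]
          exact Finset.sum_le_sum_of_subset hAsub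
        have hfinal : (∑ i ∈ S₀, lam i) + d ≤ ∑ i ∈ S₀, mu i := by
          rw [hmuS₀]; omega
        exact le_trans hfinal (le_domSum n hm0 _
          (le_trans (Finset.card_le_card hS₀T) hT))
    · -- n ∉ T : ∑_T app = ∑_{S₀} lam ≤ ∑_{S₀} mu
      have happT : ∑ i ∈ T, appendComp n lam d i = ∑ i ∈ S₀, lam i := by
        rw [← Finset.sum_subset hS₀T (by
          intro x hxT hx
          have hxn : x ≠ n := fun hc => hnT (hc ▸ hxT)
          have hxge : ¬ x < n := fun hc =>
            hx (Finset.mem_inter.mpr ⟨hxT, Finset.mem_range.mpr hc⟩)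
          unfold appendComp
          rw [if_neg hxge, if_neg hxn])]
        exact Finset.sum_congr rfl fun i hi => by
          unfold appendComp; rw [if_pos (Finset.mem_range.mp (hS₀sub hi))]
      rw [happT]
      have : ∑ i ∈ S₀, lam i ≤ ∑ i ∈ S₀, mu i := Finset.sum_le_sum fun i _ => hle i
      exact le_trans this (le_domSum n hm0 _ (le_trans (Finset.card_le_card hS₀T) hT))
  · refine ⟨n + 1, fun s hs => ?_⟩
    rw [domSum_eq_total (n + 1) happ0 hs,
      domSum_eq_total n hm0 (le_trans (Nat.le_succ n) hs), happsum, hmusum]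
end

section
/- Fix integers 0 < n₁ ≤ n₂ ≤ … ≤ n_m and a composition d̄ = (d₁,…,d_m) ∈ Z_{≥0}^m. If μ^{(0)} = (0) and μ^{(j)} ∈ Ser^{n_j}_{d_j, μ^{(j−1)}} for j = 1,…,m (where each μ^{(j−1)} is extended by trailing zeros to length n_j), then μ^{(m)}₊ ≥ (d₁,…,d_m)₊ in the dominance order. -/
namespace SerpAux

lemma sum_le_total (f : ℕ → ℕ) (N : ℕ) (hf : ∀ i, N ≤ i → f i = 0) (T : Finset ℕ) :
    ∑ i ∈ T, f i ≤ ∑ i ∈ Finset.range N, f i := by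
  classical
  have h1 : ∑ i ∈ T ∩ Finset.range N, f i = ∑ i ∈ T, f i := by
    refine Finset.sum_subset (Finset.inter_subset_left) ?_
    intro x hx hx'
    have : N ≤ x := by
      by_contra hc
      exact hx' (Finset.mem_inter.mpr ⟨hx, Finset.mem_range.mpr (by omega)⟩)
    exact hf x this
  rw [← h1]
  exact Finset.sum_le_sum_of_subset Finset.inter_subset_right

lemma domSum_set_nonempty (f : ℕ → ℕ) (s : ℕ) :
    ((fun T : Finset ℕ => ∑ i ∈ T, f i) '' {T : Finset ℕ | T.card ≤ s}).Nonempty :=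
  ⟨0, ⟨∅, by simp⟩⟩

lemma domSum_set_bdd (f : ℕ → ℕ) (N : ℕ) (hf : ∀ i, N ≤ i → f i = 0) (s : ℕ) :
    BddAbove ((fun T : Finset ℕ => ∑ i ∈ T, f i) '' {T : Finset ℕ | T.card ≤ s}) := by
  refine ⟨∑ i ∈ Finset.range N, f i, ?_⟩
  rintro x ⟨T, hT, rfl⟩
  exact sum_le_total f N hf T

lemma le_domSum {f : ℕ → ℕ} {N : ℕ} (hf : ∀ i, N ≤ i → f i = 0) {s : ℕ}
    {T : Finset ℕ} (hT : T.card ≤ s) : ∑ i ∈ T, f i ≤ domSum f s :=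
  le_csSup (domSum_set_bdd f N hf s) ⟨T, hT, rfl⟩

lemma domSum_le {f : ℕ → ℕ} {s c : ℕ}
    (h : ∀ T : Finset ℕ, T.card ≤ s → ∑ i ∈ T, f i ≤ c) : domSum f s ≤ c := by
  refine csSup_le (domSum_set_nonempty f s) ?_
  rintro x ⟨T, hT, rfl⟩
  exact h T hT

lemma domSum_spec (f : ℕ → ℕ) (N : ℕ) (hf : ∀ i, N ≤ i → f i = 0) (s : ℕ) :
    ∃ T : Finset ℕ, T.card ≤ s ∧ domSum f s = ∑ i ∈ T, f i := by
  have := Nat.sSup_mem (domSum_set_nonempty f s) (domSum_set_bdd f N hf s)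
  obtain ⟨T, hT, h⟩ := this
  exact ⟨T, hT, h.symm⟩

lemma domSum_mono {f g : ℕ → ℕ} (hfg : ∀ i, f i ≤ g i) {N : ℕ}
    (hg : ∀ i, N ≤ i → g i = 0) (s : ℕ) : domSum f s ≤ domSum g s := by
  refine domSum_le fun T hT => ?_
  calc ∑ i ∈ T, f i ≤ ∑ i ∈ T, g i := Finset.sum_le_sum fun i _ => hfg i
  _ ≤ domSum g s := le_domSum hg hT

lemma domSum_eq_total {f : ℕ → ℕ} {N : ℕ} (hf : ∀ i, N ≤ i → f i = 0) {s : ℕ}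
    (hs : N ≤ s) : domSum f s = ∑ i ∈ Finset.range N, f i := by
  refine le_antisymm (domSum_le fun T _ => sum_le_total f N hf T) ?_
  exact le_domSum hf (by simpa using hs)

/-- Key combinatorial fact: for a serpentine `mu` over `lam`, the intervals
`(lam i, mu i]` over strictly increased indices are pairwise disjoint, hence
the total increase over any such set `E` is at most the maximal `mu`-value on `E`. -/
lemma serp_inc_bound {nn d : ℕ} {lam mu : ℕ → ℕ} (h : IsSerpentine nn d lam mu)
    (E : Finset ℕ) (hE : ∀ i ∈ E, i < nn ∧ lam i < mu i)
    {k : ℕ} (hk : k ∈ E) (hmax : ∀ i ∈ E, mu i ≤ mu k) :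
    ∑ i ∈ E, (mu i - lam i) ≤ mu k := by
  classical
  obtain ⟨h0, h0', hle, hsum, hiii, hiv⟩ := h
  have key : ∀ i j, i ∈ E → j ∈ E → i < j →
      Disjoint (Finset.Ioc (lam i) (mu i)) (Finset.Ioc (lam j) (mu j)) := by
    intro i j hi hj hij
    obtain ⟨hjn, hjD⟩ := hE j hj
    obtain ⟨hin, hiD⟩ := hE i hi
    by_cases hl : lam i ≤ lam j
    · have hm : mu i ≤ lam j := hiii i j hij hjn hl
      rw [Finset.disjoint_left]
      intro x hx hx'
      simp only [Finset.mem_Ioc] at hx hx'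
      omega
    · push_neg at hl
      have hmuj : ¬ (lam i ≤ mu j) := by
        intro hc
        have := hiv i j hij hjn hl hc
        omega
      rw [Finset.disjoint_left]
      intro x hx hx'
      simp only [Finset.mem_Ioc] at hx hx'
      omega
  have hdisj : ∀ i ∈ E, ∀ j ∈ E, i ≠ j →
      Disjoint (Finset.Ioc (lam i) (mu i)) (Finset.Ioc (lam j) (mu j)) := by
    intro i hi j hj hij
    rcases lt_or_gt_of_ne hij with h | h
    · exact key i j hi hj h
    · exact (key j i hj hi h).symm
  have hcard : ∑ i ∈ E, (mu i - lam i)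
      = (E.biUnion fun i => Finset.Ioc (lam i) (mu i)).card := by
    rw [Finset.card_biUnion hdisj]
    simp [Nat.card_Ioc]
  rw [hcard]
  have hsub : (E.biUnion fun i => Finset.Ioc (lam i) (mu i)) ⊆ Finset.Ioc 0 (mu k) := by
    intro x hx
    simp only [Finset.mem_biUnion, Finset.mem_Ioc] at hx ⊢
    obtain ⟨i, hi, h1, h2⟩ := hx
    exact ⟨by omega, le_trans h2 (hmax i hi)⟩
  calc (E.biUnion fun i => Finset.Ioc (lam i) (mu i)).card
      ≤ (Finset.Ioc 0 (mu k)).card := Finset.card_le_card hsub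
  _ = mu k := by simp [Nat.card_Ioc]

/-- The key step: one serpentine step dominates appending the new entry `d`. -/
lemma serp_domSum_step {nn d : ℕ} {lam mu : ℕ → ℕ} (h : IsSerpentine nn d lam mu)
    (s : ℕ) : domSum lam s + d ≤ domSum mu (s + 1) := by
  classical
  obtain ⟨h0, h0', hle, hsum, hiii, hiv⟩ := h
  obtain ⟨T, hTc, hTs⟩ := domSum_spec lam nn h0 s
  set D : Finset ℕ := (Finset.range nn).filter (fun i => lam i < mu i) with hD
  have hDmem : ∀ i ∈ D, i < nn ∧ lam i < mu i := by
    intro i hi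
    simp only [hD, Finset.mem_filter, Finset.mem_range] at hi
    exact hi
  have hoff : ∀ i, i ∉ D → mu i - lam i = 0 := by
    intro i hi
    by_cases hin : i < nn
    · have : ¬ lam i < mu i := by
        intro hc
        exact hi (by simp [hD, Finset.mem_filter, Finset.mem_range, hin, hc])
      omega
    · have := h0 i (by omega)
      have := h0' i (by omega)
      omega
  have hd : ∑ i ∈ D, (mu i - lam i) = d := by
    rw [← hsum]
    refine Finset.sum_subset (Finset.filter_subset _ _) ?_
    intro x hx hx'
    exact hoff x hx'
  have hTsplit : ∀ S : Finset ℕ,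
      ∑ i ∈ S, mu i = ∑ i ∈ S, lam i + ∑ i ∈ S, (mu i - lam i) := by
    intro S
    rw [← Finset.sum_add_distrib]
    refine Finset.sum_congr rfl fun i _ => ?_
    have := hle i
    omega
  by_cases hDT : D \ T = ∅
  · have hsub : D ⊆ T := by
      intro x hx
      by_contra hc
      have : x ∈ D \ T := Finset.mem_sdiff.mpr ⟨hx, hc⟩
      simp [hDT] at this
    have h1 : d ≤ ∑ i ∈ T, (mu i - lam i) := by
      rw [← hd]
      exact Finset.sum_le_sum_of_subset hsub
    have h2 : ∑ i ∈ T, lam i + d ≤ ∑ i ∈ T, mu i := by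
      rw [hTsplit T]; omega
    calc domSum lam s + d = ∑ i ∈ T, lam i + d := by rw [hTs]
    _ ≤ ∑ i ∈ T, mu i := h2
    _ ≤ domSum mu (s + 1) := le_domSum h0' (by omega)
  · obtain ⟨k, hk, hkmax⟩ := Finset.exists_max_image (D \ T) mu
      (Finset.nonempty_of_ne_empty hDT)
    have hkT : k ∉ T := (Finset.mem_sdiff.mp hk).2
    have hbound : ∑ i ∈ D \ T, (mu i - lam i) ≤ mu k :=
      serp_inc_bound ⟨h0, h0', hle, hsum, hiii, hiv⟩ (D \ T)
        (fun i hi => hDmem i (Finset.mem_sdiff.mp hi).1) hk hkmax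
    have hpart : ∑ i ∈ D ∩ T, (mu i - lam i) + ∑ i ∈ D \ T, (mu i - lam i) = d := by
      rw [Finset.sum_inter_add_sum_sdiff]; exact hd
    have hDTle : ∑ i ∈ D ∩ T, (mu i - lam i) ≤ ∑ i ∈ T, (mu i - lam i) :=
      Finset.sum_le_sum_of_subset Finset.inter_subset_right
    have hScard : (insert k T).card ≤ s + 1 := by
      rw [Finset.card_insert_of_notMem hkT]; omega
    have hSsum : ∑ i ∈ insert k T, mu i = mu k + ∑ i ∈ T, mu i :=
      Finset.sum_insert hkT
    have hfin : ∑ i ∈ T, lam i + d ≤ ∑ i ∈ insert k T, mu i := by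
      have := hTsplit T
      omega
    calc domSum lam s + d = ∑ i ∈ T, lam i + d := by rw [hTs]
    _ ≤ ∑ i ∈ insert k T, mu i := hfin
    _ ≤ domSum mu (s + 1) := le_domSum h0' hScard

end SerpAux

/-- Corollary 1.6.  For a chain of iterated serpentines
`μ⁽⁰⁾ = (0)`, `μ⁽ʲ⁾ ∈ Ser^{n_j}_{d_j, μ⁽ʲ⁻¹⁾}` one has
`μ⁽ᵐ⁾₊ ≥ (d₁,…,d_m)₊` in the dominance order. -/
theorem chain_dominant_weight_inequality (m : ℕ) (hm : 0 < m)
    (n : ℕ → ℕ) (hn0 : 0 < n 0)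
    (hmono : ∀ j k, j ≤ k → k < m → n j ≤ n k)
    (d : ℕ → ℕ) (μ : ℕ → ℕ → ℕ)
    (hchain : SerpChain n m d μ) :
    DomLE (truncComp m d) (μ m) := by
  classical
  obtain ⟨hμ0, hstep⟩ := hchain
  -- vanishing of all μ j beyond n (m-1)
  have hvan : ∀ j, j ≤ m → ∀ i, n (m - 1) ≤ i → μ j i = 0 := by
    intro j hj i hi
    rcases Nat.eq_zero_or_pos j with rfl | hjpos
    · exact hμ0 i
    · have hj1 : j - 1 < m := by omega
      have h := (hstep (j - 1) hj1).2.1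
      have hle : n (j - 1) ≤ n (m - 1) := hmono (j - 1) (m - 1) (by omega) (by omega)
      have hjj : j - 1 + 1 = j := by omega
      rw [← hjj]
      exact h i (by omega)
  have htrvan : ∀ j : ℕ, ∀ i, j ≤ i → truncComp j d i = 0 := by
    intro j i hi
    simp only [truncComp]
    rw [if_neg (by omega)]
  -- the main dominance induction
  have main : ∀ j, j ≤ m → ∀ s, domSum (truncComp j d) s ≤ domSum (μ j) s := by
    intro j
    induction j with
    | zero =>
      intro _ s
      refine SerpAux.domSum_le fun T _ => ?_
      have hz : ∑ i ∈ T, truncComp 0 d i = 0 :=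
        Finset.sum_eq_zero fun i _ => htrvan 0 i (Nat.zero_le i)
      rw [hz]
      exact Nat.zero_le _
    | succ j ih =>
      intro hj s
      have hjm : j < m := by omega
      have ihj := ih (by omega)
      have hmono' : ∀ i, μ j i ≤ μ (j + 1) i := (hstep j hjm).2.2.1
      have hvanmu : ∀ i, n j ≤ i → μ (j + 1) i = 0 := (hstep j hjm).2.1
      refine SerpAux.domSum_le fun T hT => ?_
      by_cases hjT : j ∈ T
      · have hs : 1 ≤ s := by
          have : 1 ≤ T.card := Finset.card_pos.mpr ⟨j, hjT⟩
          omega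
        have hsplit : ∑ i ∈ T, truncComp (j + 1) d i
            = d j + ∑ i ∈ T.erase j, truncComp j d i := by
          rw [← Finset.add_sum_erase _ _ hjT]
          congr 1
          · simp [truncComp]
          · refine Finset.sum_congr rfl fun i hi => ?_
            have hij : i ≠ j := Finset.ne_of_mem_erase hi
            simp only [truncComp]
            by_cases h1 : i < j
            · rw [if_pos (by omega), if_pos h1]
            · rw [if_neg (by omega), if_neg h1]
        rw [hsplit]
        have h1 : ∑ i ∈ T.erase j, truncComp j d i ≤ domSum (truncComp j d) (s - 1) := by
          refine SerpAux.le_domSum (htrvan j) ?_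
          have := Finset.card_erase_of_mem hjT
          omega
        have h3 : domSum (μ j) (s - 1) + d j ≤ domSum (μ (j + 1)) (s - 1 + 1) :=
          SerpAux.serp_domSum_step (hstep j hjm) (s - 1)
        have hss : s - 1 + 1 = s := by omega
        rw [hss] at h3
        calc d j + ∑ i ∈ T.erase j, truncComp j d i
            ≤ d j + domSum (truncComp j d) (s - 1) := Nat.add_le_add_left h1 _
        _ ≤ d j + domSum (μ j) (s - 1) := Nat.add_le_add_left (ihj (s - 1)) _
        _ = domSum (μ j) (s - 1) + d j := Nat.add_comm _ _
        _ ≤ domSum (μ (j + 1)) s := h3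
      · have heq : ∑ i ∈ T, truncComp (j + 1) d i = ∑ i ∈ T, truncComp j d i := by
          refine Finset.sum_congr rfl fun i hi => ?_
          have hij : i ≠ j := fun h => hjT (h ▸ hi)
          simp only [truncComp]
          by_cases h1 : i < j
          · rw [if_pos (by omega), if_pos h1]
          · rw [if_neg (by omega), if_neg h1]
        rw [heq]
        calc ∑ i ∈ T, truncComp j d i ≤ domSum (truncComp j d) s :=
              SerpAux.le_domSum (htrvan j) hT
        _ ≤ domSum (μ j) s := ihj s
        _ ≤ domSum (μ (j + 1)) s := SerpAux.domSum_mono hmono' hvanmu s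
  -- total sums agree
  have htot : ∀ j, j ≤ m →
      ∑ i ∈ Finset.range (n (m - 1)), μ j i = ∑ i ∈ Finset.range j, d i := by
    intro j
    induction j with
    | zero => intro _; simp [hμ0]
    | succ j ih =>
      intro hj
      have hjm : j < m := by omega
      obtain ⟨hl0, hm0, hlemu, hsum, -, -⟩ := hstep j hjm
      have hnj : n j ≤ n (m - 1) := hmono j (m - 1) (by omega) (by omega)
      have hsubr : Finset.range (n j) ⊆ Finset.range (n (m - 1)) :=
        Finset.range_subset_range.mpr hnj
      have e1 : ∑ i ∈ Finset.range (n (m - 1)), μ (j + 1) i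
          = ∑ i ∈ Finset.range (n j), μ (j + 1) i := by
        symm
        refine Finset.sum_subset hsubr ?_
        intro x _ hx'
        exact hm0 x (by simpa using hx')
      have e2 : ∑ i ∈ Finset.range (n (m - 1)), μ j i
          = ∑ i ∈ Finset.range (n j), μ j i := by
        symm
        refine Finset.sum_subset hsubr ?_
        intro x _ hx'
        exact hl0 x (by simpa using hx')
      have e3 : ∑ i ∈ Finset.range (n j), μ (j + 1) i
          = ∑ i ∈ Finset.range (n j), μ j i + d j := by
        rw [← hsum, ← Finset.sum_add_distrib]
        refine Finset.sum_congr rfl fun i _ => ?_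
        have := hlemu i
        omega
      rw [e1, e3, ← e2, ih (by omega), Finset.sum_range_succ]
  constructor
  · exact main m le_rfl
  · refine ⟨max m (n (m - 1)), fun s hs => ?_⟩
    rw [SerpAux.domSum_eq_total (htrvan m) (le_trans (le_max_left _ _) hs),
      SerpAux.domSum_eq_total (hvan m le_rfl) (le_trans (le_max_right _ _) hs),
      htot m le_rfl]
    refine Finset.sum_congr rfl fun i hi => ?_
    simp only [truncComp]
    rw [if_pos (Finset.mem_range.mp hi)]
end

section
/- Fix integers 0 < n₁ ≤ n₂ ≤ … ≤ n_m and a composition d̄ = (d₁,…,d_m) ∈ Z_{≥0}^m. If d̄ is n̄-admissible, then there exists a unique chain μ^{(0)} = (0), μ^{(j)} ∈ Ser^{n_j}_{d_j, μ^{(j−1)}} for j = 1,…,m (each μ^{(j−1)} extended by trailing zeros to length n_j) such that μ^{(m)}₊ = (d₁,…,d_m)₊. If d̄ is not n̄-admissible, no such chain exists. -/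
/-!
Think of a composition as the row lengths of a diagram and look at its columns: `colLen N f x`
counts the rows longer than `x`, and two compositions have the same dominant part iff all their
column lengths agree. Going from `λ` to `μ ∈ Ser^n_{d,λ}` adds the columns `[λ_q, μ_q)` to row
`q`; conditions (iii) and (iv) make these ranges pairwise disjoint, so every column grows by at
most one and exactly `d` columns grow. Along a chain, column `x` of `μ^{(m)}` therefore has length
`Σ_j [x ∈ S_j]` with `|S_j| = d_j`, while that of `(d_1, …, d_m)` is `Σ_j [x < d_j]`. As
`|S_j ∩ [0, X)| ≤ min (d_j, X)` for every `X`, the two agree only if `S_j = [0, d_j)` at every step.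

A step with `S = [0, d)` is unique: its last row must become `max (λ_t, d)`, and the remaining
rows form such a step for `min (d, λ_t)`. It exists iff `d = 0` or `λ` has a zero entry, namely
`μ_i = max (λ_i, min (d, λ_{i+1}, …, λ_{n-1}))`. Along a chain of such steps `μ^{(j)}` has as many
nonzero entries as there are nonzero `d_k`, `k < j`, and admissibility is exactly what provides the
zero entry needed at each step.
-/

open Finset Function

def colLen (N : ℕ) (f : ℕ → ℕ) (x : ℕ) : ℕ := #{i ∈ range N | x < f i}

lemma colLen_antitone (N : ℕ) (f : ℕ → ℕ) : Antitone (colLen N f) :=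
  fun _ _ hxy => card_le_card (monotone_filter_right _ fun _ _ h => lt_of_le_of_lt hxy h)

lemma colLen_le (N : ℕ) (f : ℕ → ℕ) (x : ℕ) : colLen N f x ≤ N :=
  (card_filter_le _ _).trans (card_range N).le

lemma colLen_eq_of_le {M N : ℕ} {f : ℕ → ℕ} (hf : ∀ i, M ≤ i → f i = 0) (hMN : M ≤ N) (x : ℕ) :
    colLen N f x = colLen M f x := by
  unfold colLen
  congr 1
  ext i
  simp only [mem_filter, mem_range]
  exact ⟨fun ⟨_, hx⟩ => ⟨not_le.1 fun hi => by simp [hf i hi] at hx, hx⟩,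
    fun ⟨hi, hx⟩ => ⟨hi.trans_le hMN, hx⟩⟩

lemma exists_eq_zero_of_colLen_zero_lt {N : ℕ} {f : ℕ → ℕ} (h : colLen N f 0 < N) :
    ∃ i < N, f i = 0 := by
  by_contra! hne
  have : colLen N f 0 = N := by
    rw [colLen, filter_true_of_mem fun i hi => Nat.pos_of_ne_zero (hne i (mem_range.1 hi)),
      card_range]
  omega

lemma sum_eq_sum_card_filter_lt {ι : Type*} (T : Finset ι) (f : ι → ℕ) {B : ℕ}
    (hB : ∀ i ∈ T, f i ≤ B) : ∑ i ∈ T, f i = ∑ x ∈ range B, #{i ∈ T | x < f i} := by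
  simp_rw [card_filter]
  rw [sum_comm]
  refine sum_congr rfl fun i hi => ?_
  rw [← card_filter, show {x ∈ range B | x < f i} = range (f i) by
    ext x; simp only [mem_filter, mem_range]; have := hB i hi; omega, card_range]

lemma exists_subset_card_eq_forall_le {ι : Type*} [DecidableEq ι] (s : Finset ι) (f : ι → ℕ)
    {k : ℕ} (hk : k ≤ #s) :
    ∃ T ⊆ s, #T = k ∧ ∀ i ∈ T, ∀ j ∈ s, j ∉ T → f j ≤ f i := by
  obtain ⟨T, hT, hmax⟩ :=
    exists_max_image (powersetCard k s) (fun T => ∑ i ∈ T, f i) (powersetCard_nonempty.2 hk)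
  rw [mem_powersetCard] at hT
  refine ⟨T, hT.1, hT.2, fun i hi j hj hjT => not_lt.1 fun hlt => ?_⟩
  -- exchanging `i` for `j` would increase the sum
  have hjT' : j ∉ T.erase i := fun h => hjT (mem_of_mem_erase h)
  have hmem : insert j (T.erase i) ∈ powersetCard k s := by
    rw [mem_powersetCard, card_insert_of_notMem hjT', card_erase_of_mem hi, ← hT.2]
    exact ⟨insert_subset hj ((erase_subset i T).trans hT.1),
      Nat.sub_add_cancel (card_pos.2 ⟨i, hi⟩)⟩
  have := hmax _ hmem
  rw [sum_insert hjT', ← add_sum_erase T f hi] at this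
  omega

lemma card_filter_lt_of_forall_le {ι : Type*} {s T : Finset ι} {f : ι → ℕ} (hTs : T ⊆ s)
    (htop : ∀ i ∈ T, ∀ j ∈ s, j ∉ T → f j ≤ f i) (x : ℕ) :
    #{i ∈ T | x < f i} = min #T #{i ∈ s | x < f i} := by
  by_cases hlow : ∃ i ∈ T, f i ≤ x
  · obtain ⟨i, hi, hix⟩ := hlow
    have heq : {i ∈ T | x < f i} = {i ∈ s | x < f i} := by
      ext j
      simp only [mem_filter]
      refine ⟨fun hj => ⟨hTs hj.1, hj.2⟩, fun hj => ⟨?_, hj.2⟩⟩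
      by_contra hjT
      have := htop i hi j hj.1 hjT
      omega
    rw [heq, min_eq_right (heq ▸ card_filter_le T _)]
  · push Not at hlow
    rw [filter_true_of_mem hlow, min_eq_left]
    exact card_le_card fun i hi => mem_filter.2 ⟨hTs hi, hlow i hi⟩

lemma domSum_eq_sum_min_colLen {N B : ℕ} {f : ℕ → ℕ} (hf : ∀ i, N ≤ i → f i = 0)
    (hB : ∀ i, f i ≤ B) (s : ℕ) : domSum f s = ∑ x ∈ range B, min s (colLen N f x) := by
  refine IsGreatest.csSup_eq ⟨?_, ?_⟩
  · obtain ⟨T, hTs, hT, htop⟩ :=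
      exists_subset_card_eq_forall_le (range N) f (k := min s N) (by simp)
    refine ⟨T, by simp [hT], ?_⟩
    dsimp only
    rw [sum_eq_sum_card_filter_lt T f fun i _ => hB i]
    refine sum_congr rfl fun x _ => ?_
    rw [card_filter_lt_of_forall_le hTs htop, hT]
    have := colLen_le N f x
    unfold colLen at this ⊢
    omega
  · rintro _ ⟨T, hT, rfl⟩
    dsimp only
    rw [sum_eq_sum_card_filter_lt T f fun i _ => hB i]
    refine sum_le_sum fun x _ => le_min ((card_filter_le _ _).trans hT) (card_le_card ?_)
    intro i hi
    rw [mem_filter] at hi ⊢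
    refine ⟨mem_range.2 (not_le.1 fun hNi => ?_), hi.2⟩
    have := hf i hNi
    omega

lemma sum_min_succ (B : ℕ) (c : ℕ → ℕ) (s : ℕ) :
    ∑ x ∈ range B, min (s + 1) (c x) = ∑ x ∈ range B, min s (c x) + #{x ∈ range B | s < c x} := by
  rw [card_filter, ← sum_add_distrib]
  refine sum_congr rfl fun x _ => ?_
  split_ifs <;> omega

lemma lt_apply_iff_lt_card_filter {c : ℕ → ℕ} (hc : Antitone c) {B x : ℕ} (hx : x < B) (s : ℕ) :
    s < c x ↔ x < #{y ∈ range B | s < c y} := by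
  constructor
  · intro h
    have : range (x + 1) ⊆ {y ∈ range B | s < c y} := fun y hy => by
      rw [mem_range] at hy
      exact mem_filter.2 ⟨mem_range.2 (by omega), h.trans_le (hc (by omega))⟩
    simpa using card_le_card this
  · intro h
    by_contra! hcx
    have : {y ∈ range B | s < c y} ⊆ range x := fun y hy => by
      rw [mem_filter] at hy
      exact mem_range.2 (not_le.1 fun hxy => by have := hc hxy; omega)
    simpa using (card_le_card this).trans_lt' h

lemma eq_of_forall_sum_min_eq {c c' : ℕ → ℕ} (hc : Antitone c) (hc' : Antitone c') {B : ℕ}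
    (h : ∀ s, ∑ x ∈ range B, min s (c x) = ∑ x ∈ range B, min s (c' x)) {x : ℕ} (hx : x < B) :
    c x = c' x := by
  have hcard : ∀ s, #{y ∈ range B | s < c y} = #{y ∈ range B | s < c' y} := fun s => by
    have := sum_min_succ B c s
    have := sum_min_succ B c' s
    have := h s
    have := h (s + 1)
    omega
  refine eq_of_forall_lt_iff fun s => ?_
  rw [lt_apply_iff_lt_card_filter hc hx, lt_apply_iff_lt_card_filter hc' hx, hcard]

lemma le_sum_range_of_support {N : ℕ} {f : ℕ → ℕ} (hf : ∀ i, N ≤ i → f i = 0) (i : ℕ) :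
    f i ≤ ∑ j ∈ range N, f j := by
  rcases lt_or_ge i N with hi | hi
  · exact single_le_sum (fun _ _ => Nat.zero_le _) (mem_range.2 hi)
  · simp [hf i hi]

theorem domEq_iff_colLen_eq {N : ℕ} {f g : ℕ → ℕ} (hf : ∀ i, N ≤ i → f i = 0)
    (hg : ∀ i, N ≤ i → g i = 0) : DomEq f g ↔ ∀ x, colLen N f x = colLen N g x := by
  set B := ∑ j ∈ range N, f j + ∑ j ∈ range N, g j
  have hfB : ∀ i, f i ≤ B := fun i => (le_sum_range_of_support hf i).trans le_self_add
  have hgB : ∀ i, g i ≤ B := fun i => (le_sum_range_of_support hg i).trans le_add_self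
  simp only [DomEq, domSum_eq_sum_min_colLen hf hfB, domSum_eq_sum_min_colLen hg hgB]
  refine ⟨fun h x => ?_, fun h s => by simp only [h]⟩
  rcases lt_or_ge x B with hx | hx
  · exact eq_of_forall_sum_min_eq (colLen_antitone N f) (colLen_antitone N g) h hx
  · have hzero : ∀ k : ℕ → ℕ, (∀ i, k i ≤ B) → colLen N k x = 0 := fun k hk =>
      card_eq_zero.2 (filter_false_of_mem fun i _ => not_lt.2 ((hk i).trans hx))
    rw [hzero f hfB, hzero g hgB]

lemma card_filter_mem_eq_ite {ι α : Type*} [DecidableEq α] {s : Finset ι} {t : ι → Finset α}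
    (ht : (s : Set ι).PairwiseDisjoint t) (a : α) :
    #{i ∈ s | a ∈ t i} = if a ∈ s.biUnion t then 1 else 0 := by
  split_ifs with ha
  · obtain ⟨i, hi, hai⟩ := mem_biUnion.1 ha
    refine card_eq_one.2 ⟨i, eq_singleton_iff_unique_mem.2 ⟨mem_filter.2 ⟨hi, hai⟩, ?_⟩⟩
    intro j hj
    rw [mem_filter] at hj
    exact ht.elim_finset hj.1 hi a hj.2 hai
  · exact card_eq_zero.2 (filter_false_of_mem fun i hi hai => ha (mem_biUnion.2 ⟨i, hi, hai⟩))

lemma exists_Ico_iff_of_monotone {f : ℕ → ℕ} (hf : Monotone f) (n x : ℕ) :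
    (∃ q < n, f q ≤ x ∧ x < f (q + 1)) ↔ f 0 ≤ x ∧ x < f n := by
  induction n with
  | zero => simp
  | succ n ih =>
    have h0 := hf (Nat.zero_le n)
    have h1 := hf (show n ≤ n + 1 by omega)
    constructor
    · rintro ⟨q, hq, hqx⟩
      rcases Nat.lt_succ_iff_lt_or_eq.1 hq with hq | rfl
      · have := ih.1 ⟨q, hq, hqx⟩
        omega
      · omega
    · intro hx
      by_cases hxn : x < f n
      · obtain ⟨q, hq, hqx⟩ := ih.2 ⟨hx.1, hxn⟩
        exact ⟨q, by omega, hqx⟩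
      · exact ⟨n, n.lt_succ_self, by omega, hx.2⟩

def addedColumns (nn : ℕ) (lam mu : ℕ → ℕ) : Finset ℕ :=
  (range nn).biUnion fun q => Ico (lam q) (mu q)

lemma mem_addedColumns {nn x : ℕ} {lam mu : ℕ → ℕ} :
    x ∈ addedColumns nn lam mu ↔ ∃ q < nn, lam q ≤ x ∧ x < mu q := by
  simp [addedColumns]

namespace IsSerpentine

variable {nn d : ℕ} {lam mu : ℕ → ℕ}

theorem pairwise_disjoint_Ico (h : IsSerpentine nn d lam mu) :
    Pairwise (Disjoint on fun q => Ico (lam q) (mu q)) := by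
  obtain ⟨-, hmu, -, -, hle, hlt⟩ := h
  refine (Std.Symm.pairwise_on _).2 fun q q' hqq' => disjoint_left.2 fun x hx hx' => ?_
  rw [mem_Ico] at hx hx'
  have hq' : q' < nn := not_le.1 fun h => by have := hmu q' h; omega
  rcases le_or_gt (lam q) (lam q') with hlam | hlam
  · have := hle q q' hqq' hq' hlam
    omega
  · have := hlt q q' hqq' hq' hlam (by omega)
    omega

theorem card_addedColumns (h : IsSerpentine nn d lam mu) : #(addedColumns nn lam mu) = d := by
  rw [addedColumns, card_biUnion (h.pairwise_disjoint_Ico.set_pairwise _)]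
  simpa using h.2.2.2.1

theorem colLen_eq (h : IsSerpentine nn d lam mu) (x : ℕ) :
    colLen nn mu x = colLen nn lam x + if x ∈ addedColumns nn lam mu then 1 else 0 := by
  have hsplit : {i ∈ range nn | x < mu i} =
      {i ∈ range nn | x < lam i} ∪ {i ∈ range nn | x ∈ Ico (lam i) (mu i)} := by
    rw [← filter_or]
    refine filter_congr fun i _ => ?_
    have := h.2.2.1 i
    rw [mem_Ico]
    omega
  rw [colLen, colLen, hsplit, card_union_of_disjoint, addedColumns,
    card_filter_mem_eq_ite (h.pairwise_disjoint_Ico.set_pairwise _)]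
  exact disjoint_filter.2 fun i _ hlt hx => by rw [mem_Ico] at hx; omega


variable {t : ℕ}

theorem apply_last_eq_max (h : IsSerpentine (t + 1) d lam mu)
    (hA : addedColumns (t + 1) lam mu = range d) : mu t = max (lam t) d := by
  obtain ⟨-, -, hle, -, hup, hfix⟩ := h
  have hcol : ∀ x, (∃ q < t + 1, lam q ≤ x ∧ x < mu q) ↔ x < d := fun x => by
    rw [← mem_addedColumns, hA, mem_range]
  refine le_antisymm ?_ (max_le (hle t) (not_lt.1 fun hlt => ?_))
  · rcases (hle t).eq_or_lt with heq | hlt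
    · exact heq ▸ le_max_left _ _
    · have := (hcol (mu t - 1)).1 ⟨t, t.lt_succ_self, by omega, by omega⟩
      omega
  -- column `mu t < d` must be added in a row `q < t`, which (iii) and (iv) forbid
  · obtain ⟨q, hq, hlq, hmq⟩ := (hcol (mu t)).2 hlt
    have hqt : q < t := by
      rcases Nat.lt_succ_iff_lt_or_eq.1 hq with hq | rfl
      · exact hq
      · omega
    rcases le_or_gt (lam q) (lam t) with hlam | hlam
    · have := hup q t hqt t.lt_succ_self hlam
      have := hle t
      omega
    · have := hfix q t hqt t.lt_succ_self hlam hlq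
      omega

theorem restrict (h : IsSerpentine (t + 1) d lam mu) :
    IsSerpentine t (d - (mu t - lam t)) (truncComp t lam) (truncComp t mu) := by
  obtain ⟨-, -, hle, hsum, hup, hfix⟩ := h
  have htrunc : ∀ f : ℕ → ℕ, ∀ i < t, truncComp t f i = f i := fun f i hi => if_pos hi
  refine ⟨fun i hi => if_neg (by omega), fun i hi => if_neg (by omega), fun i => ?_, ?_,
    fun i j hij hj => ?_, fun i j hij hj => ?_⟩
  · unfold truncComp
    split_ifs
    exacts [hle i, le_rfl]
  · rw [sum_congr rfl fun i hi => by
        rw [htrunc mu i (mem_range.1 hi), htrunc lam i (mem_range.1 hi)],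
      ← hsum, sum_range_succ, Nat.add_sub_cancel]
  · rw [htrunc mu i (hij.trans hj), htrunc lam i (hij.trans hj), htrunc lam j hj]
    exact hup i j hij (by omega)
  · rw [htrunc mu i (hij.trans hj), htrunc lam i (hij.trans hj), htrunc lam j hj, htrunc mu j hj]
    exact hfix i j hij (by omega)

theorem addedColumns_truncComp (h : IsSerpentine (t + 1) d lam mu)
    (hA : addedColumns (t + 1) lam mu = range d) :
    addedColumns t (truncComp t lam) (truncComp t mu) = range (min d (lam t)) := by
  have hlast := h.apply_last_eq_max hA
  ext x
  have hcol : (∃ q < t + 1, lam q ≤ x ∧ x < mu q) ↔ x < d := by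
    rw [← mem_addedColumns, hA, mem_range]
  have hrows : (∃ q < t, truncComp t lam q ≤ x ∧ x < truncComp t mu q) ↔
      ∃ q < t, lam q ≤ x ∧ x < mu q :=
    exists_congr fun q => and_congr_right fun hq => by
      rw [truncComp, truncComp, if_pos hq, if_pos hq]
  rw [mem_addedColumns, hrows, mem_range]
  constructor
  · rintro ⟨q, hq, hx⟩
    have hxd := hcol.1 ⟨q, by omega, hx⟩
    refine lt_min hxd (not_le.1 fun hlx => ?_)
    exact disjoint_left.1 (h.pairwise_disjoint_Ico hq.ne) (mem_Ico.2 hx)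
      (mem_Ico.2 ⟨hlx, hlast ▸ lt_max_of_lt_right hxd⟩)
  · intro hx
    obtain ⟨q, hq, hqx⟩ := hcol.2 (lt_of_lt_of_le hx (min_le_left _ _))
    rcases Nat.lt_succ_iff_lt_or_eq.1 hq with hq | rfl
    · exact ⟨q, hq, hqx⟩
    · omega

theorem eq_of_addedColumns_eq_range {mu' : ℕ → ℕ}
    (h : IsSerpentine nn d lam mu) (hA : addedColumns nn lam mu = range d)
    (h' : IsSerpentine nn d lam mu') (hA' : addedColumns nn lam mu' = range d) : mu = mu' := by
  induction nn generalizing d lam mu mu' with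
  | zero => exact funext fun i => (h.2.1 i (Nat.zero_le i)).trans (h'.2.1 i (Nat.zero_le i)).symm
  | succ t ih =>
    have hd : d - (max (lam t) d - lam t) = min d (lam t) := by omega
    have hr := h.restrict
    have hr' := h'.restrict
    rw [h.apply_last_eq_max hA, hd] at hr
    rw [h'.apply_last_eq_max hA', hd] at hr'
    have hfirst :=
      congrFun (ih hr (h.addedColumns_truncComp hA) hr' (h'.addedColumns_truncComp hA'))
    funext i
    rcases lt_trichotomy i t with hi | rfl | hi
    · simpa [truncComp, hi] using hfirst i
    · rw [h.apply_last_eq_max hA, h'.apply_last_eq_max hA']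
    · rw [h.2.1 i (by omega), h'.2.1 i (by omega)]

end IsSerpentine

/-- `min (d, lam i, lam (i + 1), …, lam (nn - 1))`. -/
def suffixMin (nn d : ℕ) (lam : ℕ → ℕ) (i : ℕ) : ℕ := (Ico i nn).fold min d lam

def tightSerpentine (nn d : ℕ) (lam : ℕ → ℕ) (i : ℕ) : ℕ :=
  if i < nn then max (lam i) (suffixMin nn d lam (i + 1)) else 0

section suffixMin

variable {nn d : ℕ} {lam : ℕ → ℕ}

lemma suffixMin_le_left (i : ℕ) : suffixMin nn d lam i ≤ d :=
  (fold_min_le _).2 (Or.inl le_rfl)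

lemma suffixMin_le_apply {i j : ℕ} (hij : i ≤ j) (hj : j < nn) : suffixMin nn d lam i ≤ lam j :=
  (fold_min_le _).2 (Or.inr ⟨j, mem_Ico.2 ⟨hij, hj⟩, le_rfl⟩)

lemma suffixMin_monotone : Monotone (suffixMin nn d lam) := fun i _ hii' =>
  (le_fold_min _).2 ⟨suffixMin_le_left i, fun _ hj => suffixMin_le_apply
    (hii'.trans (mem_Ico.1 hj).1) (mem_Ico.1 hj).2⟩

lemma suffixMin_of_le {i : ℕ} (hi : nn ≤ i) : suffixMin nn d lam i = d := by
  rw [suffixMin, Ico_eq_empty_of_le hi, fold_empty]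

lemma suffixMin_of_lt {i : ℕ} (hi : i < nn) :
    suffixMin nn d lam i = min (lam i) (suffixMin nn d lam (i + 1)) := by
  rw [suffixMin, ← insert_Ico_add_one_left_eq_Ico hi, fold_insert (by simp)]
  rfl

lemma suffixMin_zero (hzero : d = 0 ∨ ∃ i < nn, lam i = 0) : suffixMin nn d lam 0 = 0 := by
  rcases hzero with rfl | ⟨i, hi, hlam⟩
  · exact Nat.le_zero.1 (suffixMin_le_left 0)
  · have := suffixMin_le_apply (d := d) (lam := lam) (Nat.zero_le i) hi
    rwa [hlam, Nat.le_zero] at this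

end suffixMin

lemma tightSerpentine_sub_apply {nn d : ℕ} {lam : ℕ → ℕ} {i : ℕ} (hi : i < nn) :
    tightSerpentine nn d lam i - lam i = suffixMin nn d lam (i + 1) - suffixMin nn d lam i := by
  rw [tightSerpentine, if_pos hi, suffixMin_of_lt hi]
  omega

theorem isSerpentine_tightSerpentine {nn d : ℕ} {lam : ℕ → ℕ} (hlam : ∀ i, nn ≤ i → lam i = 0)
    (hzero : d = 0 ∨ ∃ i < nn, lam i = 0) : IsSerpentine nn d lam (tightSerpentine nn d lam) := by
  refine ⟨hlam, fun i hi => if_neg (not_lt.2 hi), fun i => ?_, ?_, fun i j hij hj hlam' => ?_,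
    fun i j hij hj hlam' _ => ?_⟩
  · unfold tightSerpentine
    split_ifs with hi
    · exact le_max_left _ _
    · exact (hlam i (not_lt.1 hi)).le
  · rw [sum_congr rfl fun i hi => tightSerpentine_sub_apply (mem_range.1 hi),
      sum_range_tsub suffixMin_monotone, suffixMin_of_le le_rfl, suffixMin_zero hzero]
    rfl
  · rw [tightSerpentine, if_pos (hij.trans hj)]
    exact max_le hlam' (suffixMin_le_apply hij hj)
  · rw [tightSerpentine, if_pos (hij.trans hj)]
    exact max_eq_left ((suffixMin_le_apply hij hj).trans hlam'.le)

theorem addedColumns_tightSerpentine {nn d : ℕ} {lam : ℕ → ℕ}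
    (hzero : d = 0 ∨ ∃ i < nn, lam i = 0) :
    addedColumns nn lam (tightSerpentine nn d lam) = range d := by
  ext x
  have hrow : ∀ q < nn, (lam q ≤ x ∧ x < tightSerpentine nn d lam q) ↔
      (suffixMin nn d lam q ≤ x ∧ x < suffixMin nn d lam (q + 1)) := fun q hq => by
    rw [tightSerpentine, if_pos hq, suffixMin_of_lt hq]
    omega
  rw [mem_addedColumns, mem_range]
  simp only [exists_congr fun q => and_congr_right fun hq => hrow q hq]
  rw [exists_Ico_iff_of_monotone suffixMin_monotone, suffixMin_zero hzero, suffixMin_of_le le_rfl]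
  simp

theorem eq_range_of_card_filter_mem_eq {ι : Type*} {s : Finset ι} {S : ι → Finset ℕ} {d : ι → ℕ}
    (hcard : ∀ k ∈ s, #(S k) ≤ d k) (h : ∀ x, #{k ∈ s | x ∈ S k} = #{k ∈ s | x < d k}) :
    ∀ k ∈ s, S k = range (d k) := by
  have hbelow : ∀ X b, #{x ∈ range X | x < b} = min X b := fun X b => by
    rw [show {x ∈ range X | x < b} = range (min X b) by ext; simp, card_range]
  have hle : ∀ X, ∀ k ∈ s, #{x ∈ range X | x ∈ S k} ≤ #{x ∈ range X | x < d k} := fun X k hk => by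
    rw [hbelow]
    exact le_min ((card_filter_le _ _).trans (card_range X).le)
      ((card_le_card fun x hx => (mem_filter.1 hx).2).trans (hcard k hk))
  -- double counting turns `h` into equality of the sums of the inequalities `hle X`
  have heq : ∀ X, ∀ k ∈ s, #{x ∈ range X | x ∈ S k} = #{x ∈ range X | x < d k} := fun X => by
    refine (sum_eq_sum_iff_of_le (hle X)).1 ?_
    calc ∑ k ∈ s, #{x ∈ range X | x ∈ S k}
        = ∑ x ∈ range X, #{k ∈ s | x ∈ S k} :=
          sum_card_bipartiteAbove_eq_sum_card_bipartiteBelow _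
      _ = ∑ x ∈ range X, #{k ∈ s | x < d k} := sum_congr rfl fun x _ => h x
      _ = ∑ k ∈ s, #{x ∈ range X | x < d k} :=
          (sum_card_bipartiteAbove_eq_sum_card_bipartiteBelow _).symm
  intro k hk
  have hsub : range (d k) ⊆ S k := by
    have := heq (d k) k hk
    rw [hbelow, min_self] at this
    exact card_filter_eq_iff.1 (this.trans (card_range _).symm)
  exact (eq_of_subset_of_card_le hsub (by rw [card_range]; exact hcard k hk)).symm

lemma exists_bound_of_lt (n : ℕ → ℕ) (m : ℕ) : ∃ N, m ≤ N ∧ ∀ k < m, n k ≤ N :=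
  ⟨m + ∑ k ∈ range m, n k, le_self_add, fun _ hk =>
    (single_le_sum (fun _ _ => Nat.zero_le _) (mem_range.2 hk)).trans le_add_self⟩

namespace SerpChain

variable {n d : ℕ → ℕ} {m N : ℕ} {μ : ℕ → ℕ → ℕ}

theorem apply_eq_zero (hch : SerpChain n m d μ) (hN : ∀ k < m, n k ≤ N) {j : ℕ} (hj : j ≤ m)
    {i : ℕ} (hi : N ≤ i) : μ j i = 0 := by
  cases j with
  | zero => exact hch.1 i
  | succ k => exact (hch.2 k (by omega)).2.1 i ((hN k (by omega)).trans hi)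

theorem colLen_eq (hch : SerpChain n m d μ) (hN : ∀ k < m, n k ≤ N) {j : ℕ} (hj : j ≤ m)
    (x : ℕ) : colLen N (μ j) x = #{k ∈ range j | x ∈ addedColumns (n k) (μ k) (μ (k + 1))} := by
  induction j with
  | zero => simp [colLen, hch.1]
  | succ j ih =>
    have hs := hch.2 j hj
    rw [colLen_eq_of_le hs.2.1 (hN j hj), hs.colLen_eq, ← colLen_eq_of_le hs.1 (hN j hj),
      ih (by omega), card_filter, card_filter, sum_range_succ]

theorem colLen_eq_card_filter_lt (hch : SerpChain n m d μ)
    (htight : ∀ k < m, addedColumns (n k) (μ k) (μ (k + 1)) = range (d k))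
    (hN : ∀ k < m, n k ≤ N) {j : ℕ} (hj : j ≤ m) (x : ℕ) :
    colLen N (μ j) x = #{k ∈ range j | x < d k} := by
  rw [hch.colLen_eq hN hj]
  exact congrArg card (filter_congr fun k hk => by
    rw [htight k ((mem_range.1 hk).trans_le hj), mem_range])

theorem domEq_iff (hch : SerpChain n m d μ) :
    DomEq (μ m) (truncComp m d) ↔ ∀ k < m, addedColumns (n k) (μ k) (μ (k + 1)) = range (d k) := by
  obtain ⟨N, hmN, hN⟩ := exists_bound_of_lt n m
  have htsupp : ∀ i, m ≤ i → truncComp m d i = 0 := fun i hi => if_neg (not_lt.2 hi)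
  have htrunc : ∀ x, colLen N (truncComp m d) x = #{k ∈ range m | x < d k} := fun x => by
    rw [colLen_eq_of_le htsupp hmN, colLen]
    exact congrArg card (filter_congr fun k hk => by rw [truncComp, if_pos (mem_range.1 hk)])
  rw [domEq_iff_colLen_eq (fun i hi => hch.apply_eq_zero hN le_rfl hi)
    (fun i hi => htsupp i (hmN.trans hi))]
  simp only [htrunc]
  refine ⟨fun h k hk => ?_, fun htight x => hch.colLen_eq_card_filter_lt htight hN le_rfl x⟩
  simp only [hch.colLen_eq hN le_rfl] at h
  exact eq_range_of_card_filter_mem_eq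
    (fun k' hk' => (hch.2 k' (mem_range.1 hk')).card_addedColumns.le) h k (mem_range.2 hk)

theorem nAdmissible (hch : SerpChain n m d μ) (hdom : DomEq (μ m) (truncComp m d)) :
    NAdmissible n m d := by
  intro s hs
  obtain ⟨N, -, hN⟩ := exists_bound_of_lt n m
  have hrow := (hch.2 s hs).2.1
  calc #{j ∈ range (s + 1) | d j ≠ 0}
      = colLen N (μ (s + 1)) 0 := by
        rw [hch.colLen_eq_card_filter_lt (hch.domEq_iff.1 hdom) hN hs]
        simp only [Nat.pos_iff_ne_zero]
    _ = colLen (n s) (μ (s + 1)) 0 := colLen_eq_of_le hrow (hN s hs) 0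
    _ ≤ n s := colLen_le _ _ _

theorem eq_of_domEq {μ' : ℕ → ℕ → ℕ} (hch : SerpChain n m d μ)
    (hdom : DomEq (μ m) (truncComp m d)) (hch' : SerpChain n m d μ')
    (hdom' : DomEq (μ' m) (truncComp m d)) : ∀ j ≤ m, μ j = μ' j
  | 0, _ => funext fun i => (hch.1 i).trans (hch'.1 i).symm
  | j + 1, hj => by
    have ih := eq_of_domEq hch hdom hch' hdom' j (by omega)
    have hA' := hch'.domEq_iff.1 hdom' j hj
    rw [← ih] at hA'
    exact (hch.2 j hj).eq_of_addedColumns_eq_range (hch.domEq_iff.1 hdom j hj)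
      (ih ▸ hch'.2 j hj) hA'

end SerpChain

def tightChain (n d : ℕ → ℕ) : ℕ → ℕ → ℕ
  | 0 => fun _ => 0
  | j + 1 => tightSerpentine (n j) (d j) (tightChain n d j)

theorem serpChain_tightChain {n d : ℕ → ℕ} {m : ℕ} (hmono : ∀ j k, j ≤ k → k < m → n j ≤ n k)
    (hadm : NAdmissible n m d) : ∀ j ≤ m, SerpChain n j d (tightChain n d) ∧
      ∀ k < j, addedColumns (n k) (tightChain n d k) (tightChain n d (k + 1)) = range (d k)
  | 0, _ => ⟨⟨fun _ => rfl, fun _ h => absurd h (Nat.not_lt_zero _)⟩,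
      fun _ h => absurd h (Nat.not_lt_zero _)⟩
  | j + 1, hj => by
    obtain ⟨hch, htight⟩ := serpChain_tightChain hmono hadm j (by omega)
    have hN : ∀ k < j, n k ≤ n j := fun k hk => hmono k j hk.le (by omega)
    have hzero : d j = 0 ∨ ∃ i < n j, tightChain n d j i = 0 := by
      refine or_iff_not_imp_left.2 fun hdj => exists_eq_zero_of_colLen_zero_lt ?_
      have hcount := hadm j (by omega)
      rw [range_add_one, filter_insert, if_pos hdj, card_insert_of_notMem (by simp)] at hcount
      rw [hch.colLen_eq_card_filter_lt htight hN le_rfl]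
      simp only [Nat.pos_iff_ne_zero]
      omega
    have hstep := isSerpentine_tightSerpentine (fun i hi => hch.apply_eq_zero hN le_rfl hi) hzero
    refine ⟨⟨hch.1, fun k hk => ?_⟩, fun k hk => ?_⟩
    · rcases Nat.lt_succ_iff_lt_or_eq.1 hk with hk | rfl
      exacts [hch.2 k hk, hstep]
    · rcases Nat.lt_succ_iff_lt_or_eq.1 hk with hk | rfl
      exacts [htight k hk, addedColumns_tightSerpentine hzero]

theorem chain_exists_unique_iff_admissible_general (m : ℕ)
    (n : ℕ → ℕ)
    (hmono : ∀ j k, j ≤ k → k < m → n j ≤ n k)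
    (d : ℕ → ℕ) :
    (NAdmissible n m d →
      (∃ μ, SerpChain n m d μ ∧ DomEq (μ m) (truncComp m d)) ∧
      (∀ μ μ', SerpChain n m d μ → DomEq (μ m) (truncComp m d) →
        SerpChain n m d μ' → DomEq (μ' m) (truncComp m d) →
        ∀ j, j ≤ m → μ j = μ' j)) ∧
    (¬ NAdmissible n m d →
      ¬ ∃ μ, SerpChain n m d μ ∧ DomEq (μ m) (truncComp m d)) := by
  refine ⟨fun hadm => ⟨?_, fun μ μ' hch hdom hch' hdom' => hch.eq_of_domEq hdom hch' hdom'⟩,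
    fun hnot ⟨μ, hch, hdom⟩ => hnot (hch.nAdmissible hdom)⟩
  obtain ⟨hch, htight⟩ := serpChain_tightChain hmono hadm m le_rfl
  exact ⟨tightChain n d, hch, hch.domEq_iff.2 htight⟩

/-- Corollary 1.10.  If `d̄` is `n̄`-admissible, there is a unique
chain of iterated serpentines `μ⁽⁰⁾ = (0)`, `μ⁽ʲ⁾ ∈ Ser^{n_j}_{d_j, μ⁽ʲ⁻¹⁾}`
with `μ⁽ᵐ⁾₊ = (d₁,…,d_m)₊`; if `d̄` is not `n̄`-admissible, no such chain exists. -/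
theorem chain_exists_unique_iff_admissible (m : ℕ) (hm : 0 < m)
    (n : ℕ → ℕ) (hn0 : 0 < n 0)
    (hmono : ∀ j k, j ≤ k → k < m → n j ≤ n k)
    (d : ℕ → ℕ) :
    (NAdmissible n m d →
      (∃ μ, SerpChain n m d μ ∧ DomEq (μ m) (truncComp m d)) ∧
      (∀ μ μ', SerpChain n m d μ → DomEq (μ m) (truncComp m d) →
        SerpChain n m d μ' → DomEq (μ' m) (truncComp m d) →
        ∀ j, j ≤ m → μ j = μ' j)) ∧
    (¬ NAdmissible n m d →
      ¬ ∃ μ, SerpChain n m d μ ∧ DomEq (μ m) (truncComp m d)) :=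
  chain_exists_unique_iff_admissible_general m n hmono d
end

section
/- Fix integers 0 < n₁ ≤ n₂ ≤ … ≤ n_m. For every s ∈ Sc_n̄, if the set {t ∈ Sc_n̄ : t ≺ s} is nonempty, then it has a unique minimal element (equivalently, a minimum); consequently the Hasse diagram of the poset (Sc_n̄, ⪯) is a forest with smaller elements closer to the roots. -/
/-- Cells are pairs `(i, j)` (row `i`, column `j`, both 0-based); the Young diagram
`Y_n̄` consists of the cells with `j < m` and `i < n j`.  `IsSCorner n m Rr Rc c`
says that, after removing the rows in `Rr` and the columns in `Rc` from `Y_n̄`,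
the cell `c` is a corner of the remaining (renumbered) Young diagram: it is the
lowest remaining cell of its column and the leftmost remaining cell of its row. -/
def IsSCorner (n : ℕ → ℕ) (m : ℕ) (Rr Rc : Set ℕ) (c : ℕ × ℕ) : Prop :=
  c.2 < m ∧ c.1 < n c.2 ∧ c.1 ∉ Rr ∧ c.2 ∉ Rc ∧
  (∀ i, c.1 < i → i < n c.2 → i ∈ Rr) ∧
  (∀ j, j < c.2 → j ∉ Rc → n j ≤ c.1)

/-- An execution of the thin-hook removal process on `Y_n̄`: a list of cells, each
of which is a corner of the diagram remaining after deleting the rows and columns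
of the previously recorded cells, such that at the end every cell of `Y_n̄` lies
in a removed row or in a removed column (the diagram is empty). -/
def IsExec (n : ℕ → ℕ) (m : ℕ) (l : List (ℕ × ℕ)) : Prop :=
  (∀ t (ht : t < l.length),
    IsSCorner n m {i | ∃ c ∈ l.take t, c.1 = i} {j | ∃ c ∈ l.take t, c.2 = j}
      (l.get ⟨t, ht⟩)) ∧
  (∀ i j, j < m → i < n j → (∃ c ∈ l, c.1 = i) ∨ (∃ c ∈ l, c.2 = j))

/-- `S` is the set of staircase corners of `Y_n̄`: the recorded set of some
execution of the thin-hook removal process. -/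
def IsScSet (n : ℕ → ℕ) (m : ℕ) (S : Set (ℕ × ℕ)) : Prop :=
  ∃ l : List (ℕ × ℕ), IsExec n m l ∧ S = {c | c ∈ l}

/-- The partial order on staircase corners: `(i,j) ⪯ (i',j')` iff `i ≤ i'` and
`j' ≤ j` (to increase, move down and to the left). -/
def ScLE (c c' : ℕ × ℕ) : Prop := c.1 ≤ c'.1 ∧ c'.2 ≤ c.2

/-- A DL-dense array: an array supported on the staircase corners `S` which is
order-preserving for the staircase-corner order. -/
def DLDense (S : Set (ℕ × ℕ)) (R : ℕ × ℕ → ℕ) : Prop :=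
  (∀ c, c ∉ S → R c = 0) ∧ ∀ c c', c ∈ S → c' ∈ S → ScLE c c' → R c ≤ R c'

/-- Vertical weight of an array: the sum of the entries in column `j`. -/
def vrtW (n : ℕ → ℕ) (R : ℕ × ℕ → ℕ) (j : ℕ) : ℕ := ∑ i ∈ Finset.range (n j), R (i, j)

/-- Horizontal weight of an array: the sum of the entries in row `i`. -/
def horW (m : ℕ) (R : ℕ × ℕ → ℕ) (i : ℕ) : ℕ := ∑ j ∈ Finset.range m, R (i, j)

lemma aux_get_mem_take (l : List (ℕ × ℕ)) (p q : ℕ) (hp : p < q) (hq : q ≤ l.length) :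
    l.get ⟨p, by omega⟩ ∈ l.take q := by
  have h1 : (l.take q)[p]'(by simp; omega) = l[p]'(by omega) := List.getElem_take ..
  rw [List.get_eq_getElem, ← h1]
  exact List.getElem_mem _

lemma aux_index_of_mem_take (l : List (ℕ × ℕ)) (a : ℕ × ℕ) (q : ℕ) (h : a ∈ l.take q) :
    ∃ i, ∃ h : i < l.length, i < q ∧ l.get ⟨i, h⟩ = a := by
  rw [List.mem_take_iff_getElem] at h
  obtain ⟨i, hi, he⟩ := h
  exact ⟨i, by omega, by omega, he⟩

section
variable {n : ℕ → ℕ} {m : ℕ} {l : List (ℕ × ℕ)} (hl : IsExec n m l)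

include hl

lemma aux_row_ne {p q : ℕ} (hp : p < l.length) (hq : q < l.length) (hpq : p < q) :
    (l.get ⟨p, hp⟩).1 ≠ (l.get ⟨q, hq⟩).1 := by
  intro h
  exact (hl.1 q hq).2.2.1 ⟨l.get ⟨p, hp⟩, aux_get_mem_take l p q hpq (le_of_lt hq), h⟩

lemma aux_col_ne {p q : ℕ} (hp : p < l.length) (hq : q < l.length) (hpq : p < q) :
    (l.get ⟨p, hp⟩).2 ≠ (l.get ⟨q, hq⟩).2 := by
  intro h
  exact (hl.1 q hq).2.2.2.1 ⟨l.get ⟨p, hp⟩, aux_get_mem_take l p q hpq (le_of_lt hq), h⟩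

lemma aux_row_inj {p q : ℕ} (hp : p < l.length) (hq : q < l.length)
    (h : (l.get ⟨p, hp⟩).1 = (l.get ⟨q, hq⟩).1) : p = q := by
  rcases lt_trichotomy p q with h' | h' | h'
  · exact absurd h (aux_row_ne hl hp hq h')
  · exact h'
  · exact absurd h.symm (aux_row_ne hl hq hp h')

lemma aux_col_inj {p q : ℕ} (hp : p < l.length) (hq : q < l.length)
    (h : (l.get ⟨p, hp⟩).2 = (l.get ⟨q, hq⟩).2) : p = q := by
  rcases lt_trichotomy p q with h' | h' | h'
  · exact absurd h (aux_col_ne hl hp hq h')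
  · exact h'
  · exact absurd h.symm (aux_col_ne hl hq hp h')

/-- If the row of `l.get q` lies strictly between the row of `l.get p` and the
height of the column of `l.get p`, then `q` was removed before `p`. -/
lemma aux_T1 {p q : ℕ} (hp : p < l.length) (hq : q < l.length)
    (h1 : (l.get ⟨p, hp⟩).1 < (l.get ⟨q, hq⟩).1)
    (h2 : (l.get ⟨q, hq⟩).1 < n (l.get ⟨p, hp⟩).2) : q < p := by
  have := (hl.1 p hp).2.2.2.2.1 (l.get ⟨q, hq⟩).1 h1 h2
  obtain ⟨c, hc, hc1⟩ := this
  obtain ⟨i, hi, hilt, hie⟩ := aux_index_of_mem_take l c p hc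
  have : i = q := aux_row_inj hl hi hq (by rw [hie, hc1])
  omega

/-- If the column of `l.get p` is left of the column of `l.get q` and its height
exceeds the row of `l.get q`, then `p` was removed before `q`. -/
lemma aux_T2 {p q : ℕ} (hp : p < l.length) (hq : q < l.length)
    (h1 : (l.get ⟨p, hp⟩).2 < (l.get ⟨q, hq⟩).2)
    (h2 : (l.get ⟨q, hq⟩).1 < n (l.get ⟨p, hp⟩).2) : p < q := by
  by_cases hin : (l.get ⟨p, hp⟩).2 ∈ {j | ∃ c ∈ l.take q, c.2 = j}
  · obtain ⟨c, hc, hc2⟩ := hin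
    obtain ⟨i, hi, hilt, hie⟩ := aux_index_of_mem_take l c q hc
    have : i = p := aux_col_inj hl hi hp (by rw [hie, hc2])
    omega
  · have := (hl.1 q hq).2.2.2.2.2 (l.get ⟨p, hp⟩).2 h1 hin
    omega

lemma aux_mem_row_inj {a b : ℕ × ℕ} (ha : a ∈ l) (hb : b ∈ l) (h : a.1 = b.1) :
    a = b := by
  obtain ⟨pa, hpa⟩ := List.mem_iff_get.1 ha
  obtain ⟨pb, hpb⟩ := List.mem_iff_get.1 hb
  have := aux_row_inj hl pa.2 pb.2 (by rw [hpa, hpb]; exact h)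
  rw [← hpa, ← hpb]
  congr 1
  exact Fin.ext this

lemma aux_incomp (hmono : ∀ j k, j ≤ k → k < m → n j ≤ n k)
    {s t t' : ℕ × ℕ} (hs : s ∈ l) (ht : t ∈ l) (ht' : t' ∈ l)
    (hts : ScLE t s) (ht's : ScLE t' s) (hne' : t' ≠ s)
    (h1 : t.1 < t'.1) (h2 : t.2 < t'.2) : False := by
  obtain ⟨ps, hps⟩ := List.mem_iff_get.1 hs
  obtain ⟨pt, hpt⟩ := List.mem_iff_get.1 ht
  obtain ⟨pt', hpt'⟩ := List.mem_iff_get.1 ht'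
  have hsm : s.1 < n s.2 := by have := (hl.1 ps ps.2).2.1; rwa [hps] at this
  have htm : t.2 < m := by have := (hl.1 pt pt.2).1; rwa [hpt] at this
  have hns : n s.2 ≤ n t.2 := hmono s.2 t.2 hts.2 htm
  have ht'row : t'.1 < s.1 := by
    rcases lt_or_eq_of_le ht's.1 with h | h
    · exact h
    · exact absurd (aux_mem_row_inj hl ht' hs h) hne'
  have hkey : t'.1 < n t.2 := by omega
  have hA : pt'.1 < pt.1 := aux_T1 hl pt.2 pt'.2 (by rw [hpt, hpt']; exact h1)
    (by rw [hpt, hpt']; exact hkey)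
  have hB : pt.1 < pt'.1 := aux_T2 hl pt.2 pt'.2 (by rw [hpt, hpt']; exact h2)
    (by rw [hpt, hpt']; exact hkey)
  omega

end

/-- Lemma 1.15 (1).  For every staircase corner `s`, the set of
staircase corners strictly smaller than `s` has a minimum whenever it is nonempty;
hence the Hasse diagram of `(Sc_n̄, ⪯)` is a forest with smaller elements closer
to the roots. -/
theorem staircase_corners_forest (m : ℕ) (hm : 0 < m)
    (n : ℕ → ℕ) (hn0 : 0 < n 0)
    (hmono : ∀ j k, j ≤ k → k < m → n j ≤ n k)
    (S : Set (ℕ × ℕ)) (hS : IsScSet n m S)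
    (s : ℕ × ℕ) (hs : s ∈ S)
    (hne : {t | t ∈ S ∧ ScLE t s ∧ t ≠ s}.Nonempty) :
    ∃ t₀ ∈ {t | t ∈ S ∧ ScLE t s ∧ t ≠ s},
      ∀ t ∈ {t | t ∈ S ∧ ScLE t s ∧ t ≠ s}, ScLE t₀ t := by
  classical
  obtain ⟨l, hl, hSeq⟩ := hS
  have hmem : ∀ t : ℕ × ℕ, t ∈ S ↔ t ∈ l := by intro t; rw [hSeq]; rfl
  have hP : ∃ k, ∃ t ∈ {t | t ∈ S ∧ ScLE t s ∧ t ≠ s}, t.1 = k := by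
    obtain ⟨u, hu⟩ := hne
    exact ⟨u.1, u, hu, rfl⟩
  obtain ⟨t₀, ht₀, ht₀1⟩ := Nat.find_spec hP
  refine ⟨t₀, ht₀, ?_⟩
  intro t ht
  by_cases heq : t = t₀
  · subst heq; exact ⟨le_rfl, le_rfl⟩
  · have hle : Nat.find hP ≤ t.1 := Nat.find_le ⟨t, ht, rfl⟩
    have hne1 : t₀.1 ≠ t.1 := by
      intro h
      exact heq (aux_mem_row_inj hl ((hmem t).1 ht.1) ((hmem t₀).1 ht₀.1) h.symm)
    have hrow : t₀.1 < t.1 := by omega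
    have hcol : t.2 ≤ t₀.2 := by
      by_contra h
      push_neg at h
      exact aux_incomp hl hmono ((hmem s).1 hs) ((hmem t₀).1 ht₀.1)
        ((hmem t).1 ht.1) ht₀.2.1 ht.2.1 ht.2.2 hrow h
    exact ⟨le_of_lt hrow, hcol⟩
end

section
/- Fix integers 0 < n₁ ≤ n₂ ≤ … ≤ n_m. For every s = (i₀,j₀) ∈ Sc_n̄ there exist integers j_s ≤ j₀ and i_s ≥ i₀ such that for every t = (i,j) ∈ Sc_n̄ one has: t ⪰ s ⇔ j_s ≤ j ≤ j₀ ⇔ i₀ ≤ i ≤ i_s. In other words, the set of column indices of elements of Sc_n̄ that are ≥ s is exactly an integer interval ending at the column of s, and the set of their row indices is exactly an integer interval starting at the row of s. -/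
section Aux
variable {n : ℕ → ℕ} {m : ℕ} {l : List (ℕ × ℕ)}

lemma take_index {a : ℕ × ℕ} {q : ℕ} (h : a ∈ l.take q) :
    ∃ i, i < q ∧ ∃ h : i < l.length, l[i] = a := by
  obtain ⟨i, hi, rfl⟩ := List.mem_iff_getElem.mp h
  have hlen : i < min q l.length := by simpa [List.length_take] using hi
  exact ⟨i, by omega, by omega, (List.getElem_take ..).symm⟩

lemma exec_corner (hl : IsExec n m l) {p : ℕ} (hp : p < l.length) :
    IsSCorner n m {i | ∃ c ∈ l.take p, c.1 = i} {j | ∃ c ∈ l.take p, c.2 = j} l[p] :=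
  hl.1 p hp

lemma exec_ne (hl : IsExec n m l) {p q : ℕ} (hp : p < l.length) (hq : q < l.length)
    (hpq : p < q) : l[p].1 ≠ l[q].1 ∧ l[p].2 ≠ l[q].2 := by
  obtain ⟨-, -, hr, hc, -, -⟩ := exec_corner hl hq
  have h1 : p < (l.take q).length := by simp [List.length_take]; omega
  have h2 : (l.take q)[p] = l[p] := List.getElem_take ..
  have hmem : l[p] ∈ l.take q := h2 ▸ List.getElem_mem _
  exact ⟨fun h => hr ⟨l[p], hmem, h⟩, fun h => hc ⟨l[p], hmem, h⟩⟩

lemma exec_idx_fst (hl : IsExec n m l) {p q : ℕ} (hp : p < l.length) (hq : q < l.length)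
    (h : l[p].1 = l[q].1) : p = q := by
  rcases lt_trichotomy p q with h' | h' | h'
  · exact absurd h (exec_ne hl hp hq h').1
  · exact h'
  · exact absurd h.symm (exec_ne hl hq hp h').1

lemma exec_idx_snd (hl : IsExec n m l) {p q : ℕ} (hp : p < l.length) (hq : q < l.length)
    (h : l[p].2 = l[q].2) : p = q := by
  rcases lt_trichotomy p q with h' | h' | h'
  · exact absurd h (exec_ne hl hp hq h').2
  · exact h'
  · exact absurd h.symm (exec_ne hl hq hp h').2

lemma exec_fst_inj (hl : IsExec n m l) {b c : ℕ × ℕ} (hb : b ∈ l) (hc : c ∈ l)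
    (h : b.1 = c.1) : b = c := by
  obtain ⟨p, hp, rfl⟩ := List.mem_iff_getElem.mp hb
  obtain ⟨q, hq, rfl⟩ := List.mem_iff_getElem.mp hc
  have := exec_idx_fst hl hp hq h
  subst this
  rfl

lemma exec_snd_inj (hl : IsExec n m l) {b c : ℕ × ℕ} (hb : b ∈ l) (hc : c ∈ l)
    (h : b.2 = c.2) : b = c := by
  obtain ⟨p, hp, rfl⟩ := List.mem_iff_getElem.mp hb
  obtain ⟨q, hq, rfl⟩ := List.mem_iff_getElem.mp hc
  have := exec_idx_snd hl hp hq h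
  subst this
  rfl

lemma exec_basic (hl : IsExec n m l) {c : ℕ × ℕ} (hc : c ∈ l) : c.2 < m ∧ c.1 < n c.2 := by
  obtain ⟨p, hp, rfl⟩ := List.mem_iff_getElem.mp hc
  obtain ⟨h1, h2, -⟩ := exec_corner hl hp
  exact ⟨h1, h2⟩

/-- Key lemma: no "NW pattern with overlap". -/
lemma exec_no_pattern (hl : IsExec n m l) {b c : ℕ × ℕ} (hb : b ∈ l) (hc : c ∈ l)
    (h2 : b.2 < c.2) (h1 : b.1 < c.1) : n b.2 ≤ c.1 := by
  by_contra hlt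
  push_neg at hlt
  obtain ⟨p, hp, rfl⟩ := List.mem_iff_getElem.mp hb
  obtain ⟨q, hq, rfl⟩ := List.mem_iff_getElem.mp hc
  obtain ⟨-, -, -, -, h5, -⟩ := exec_corner hl hp
  obtain ⟨e, he, he1⟩ := h5 _ h1 hlt
  obtain ⟨r, hrp, hrl, rfl⟩ := take_index he
  have hrq : r = q := exec_idx_fst hl hrl hq he1
  obtain ⟨-, -, -, -, -, h6⟩ := exec_corner hl hq
  have hmem : l[p].2 ∈ {j | ∃ c ∈ l.take q, c.2 = j} := by
    by_contra hnot
    exact absurd (h6 _ h2 hnot) (by omega)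
  obtain ⟨f, hf, hf2⟩ := hmem
  obtain ⟨r', hr'q, hr'l, rfl⟩ := take_index hf
  have : r' = p := exec_idx_snd hl hr'l hp hf2
  omega

end Aux

/-- Lemma 1.15 (2).  For every staircase corner `s = (i₀, j₀)`,
the staircase corners `t ⪰ s` are exactly those whose column index lies in an
integer interval ending at the column of `s`, and also exactly those whose row
index lies in an integer interval starting at the row of `s`. -/
theorem staircase_corners_intervals (m : ℕ) (hm : 0 < m)
    (n : ℕ → ℕ) (hn0 : 0 < n 0)
    (hmono : ∀ j k, j ≤ k → k < m → n j ≤ n k)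
    (S : Set (ℕ × ℕ)) (hS : IsScSet n m S) :
    ∀ s ∈ S, ∃ js is : ℕ, js ≤ s.2 ∧ s.1 ≤ is ∧
      ∀ t ∈ S, (ScLE s t ↔ js ≤ t.2 ∧ t.2 ≤ s.2) ∧
               (ScLE s t ↔ s.1 ≤ t.1 ∧ t.1 ≤ is) := by
  classical
  obtain ⟨l, hl, rfl⟩ := hS
  intro s hs
  have hsl : s ∈ l := hs
  have hsm : s.2 < m ∧ s.1 < n s.2 := exec_basic hl hsl
  set F : Finset (ℕ × ℕ) := l.toFinset.filter (fun t => ScLE s t) with hF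
  have hFs : ∀ t ∈ F, t ∈ l ∧ ScLE s t := by
    intro t ht
    obtain ⟨h1, h2⟩ := Finset.mem_filter.mp ht
    exact ⟨List.mem_toFinset.mp h1, h2⟩
  have hsF : s ∈ F := Finset.mem_filter.mpr ⟨List.mem_toFinset.mpr hsl, le_refl _, le_refl _⟩
  have hne2 : (F.image Prod.snd).Nonempty := ⟨s.2, Finset.mem_image_of_mem _ hsF⟩
  have hne1 : (F.image Prod.fst).Nonempty := ⟨s.1, Finset.mem_image_of_mem _ hsF⟩
  refine ⟨(F.image Prod.snd).min' hne2, (F.image Prod.fst).max' hne1,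
    Finset.min'_le _ _ (Finset.mem_image_of_mem _ hsF),
    Finset.le_max' _ _ (Finset.mem_image_of_mem _ hsF), ?_⟩
  intro t ht
  have htl : t ∈ l := ht
  constructor
  · constructor
    · intro hle
      exact ⟨Finset.min'_le _ _ (Finset.mem_image_of_mem _
        (Finset.mem_filter.mpr ⟨List.mem_toFinset.mpr htl, hle⟩)), hle.2⟩
    · rintro ⟨hjt, hts⟩
      by_contra hnot
      have ht1 : t.1 < s.1 := by
        by_contra h
        push_neg at h
        exact hnot ⟨h, hts⟩
      have hts2 : t.2 < s.2 := by
        rcases lt_or_eq_of_le hts with h | h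
        · exact h
        · have := exec_snd_inj hl htl hsl h
          subst this
          omega
      obtain ⟨u, huF, hu2⟩ := Finset.mem_image.mp ((F.image Prod.snd).min'_mem hne2)
      obtain ⟨hul, hsu⟩ := hFs u huF
      have hu2t : u.2 < t.2 := by
        have hle : u.2 ≤ t.2 := hu2 ▸ hjt
        rcases lt_or_eq_of_le hle with h | h
        · exact h
        · have := exec_snd_inj hl hul htl h
          subst this
          exact absurd hsu hnot
      have hx : n t.2 ≤ s.1 := exec_no_pattern hl htl hsl hts2 ht1
      have hmu : n u.2 ≤ n t.2 := hmono u.2 t.2 (le_of_lt hu2t) (by omega)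
      have hub : u.1 < n u.2 := (exec_basic hl hul).2
      have := hsu.1
      omega
  · constructor
    · intro hle
      exact ⟨hle.1, Finset.le_max' _ _ (Finset.mem_image_of_mem _
        (Finset.mem_filter.mpr ⟨List.mem_toFinset.mpr htl, hle⟩))⟩
    · rintro ⟨hst, hti⟩
      by_contra hnot
      have ht2 : s.2 < t.2 := by
        by_contra h
        push_neg at h
        exact hnot ⟨hst, h⟩
      have hst1 : s.1 < t.1 := by
        rcases lt_or_eq_of_le hst with h | h
        · exact h
        · have := exec_fst_inj hl hsl htl h
          subst this
          omega
      obtain ⟨u, huF, hu1⟩ := Finset.mem_image.mp ((F.image Prod.fst).max'_mem hne1)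
      obtain ⟨hul, hsu⟩ := hFs u huF
      have hu1t : t.1 < u.1 := by
        have hle : t.1 ≤ u.1 := hu1 ▸ hti
        rcases lt_or_eq_of_le hle with h | h
        · exact h
        · have := exec_fst_inj hl htl hul h
          subst this
          exact absurd hsu hnot
      have hx : n s.2 ≤ t.1 := exec_no_pattern hl hsl htl ht2 hst1
      have hmu : n u.2 ≤ n s.2 := hmono u.2 s.2 hsu.2 hsm.1
      have hub : u.1 < n u.2 := (exec_basic hl hul).2
      omega
end

section
/- Fix integers 0 < n₁ ≤ n₂ ≤ … ≤ n_m and let R be a DL-dense array on Y_n̄. Set d_j = vrt(R)_j for j = 1,…,m, and define compositions μ^{(j)} ∈ Z_{≥0}^{n_j} by μ^{(j)}_i = Σ_{a=1}^{j} R_{i,a}. Then μ^{(j)} ∈ Ser^{n_j}_{d_j, μ^{(j−1)}} for every j = 1,…,m (with μ^{(0)} = (0) and each μ^{(j−1)} extended by trailing zeros to length n_j). -/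
/-!
A nonzero entry `R (i, a)` sits on a staircase corner, which was recorded as a corner of what
remained of the diagram; hence no other corner lies in row `i` (so `μ⁽ᵃ⁾_i = 0`), and every row
`j` with `i < j < n a` had already been deleted by a corner `(j, b)` lying left of column `a`.
Density then gives `R (i, a) ≤ R (j, b) ≤ μ⁽ᵃ⁾_j`, which is exactly what the serpentine
conditions ask of the entry `μ⁽ᵃ⁺¹⁾_i = R (i, a)` whenever it differs from `μ⁽ᵃ⁾_i`.
-/

open Finset

theorem isSerpentine_of_eq_or_le {nn d : ℕ} {lam mu : ℕ → ℕ}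
    (hlam : ∀ i, nn ≤ i → lam i = 0) (hmu : ∀ i, nn ≤ i → mu i = 0)
    (hle : ∀ i, lam i ≤ mu i) (hsum : ∑ i ∈ range nn, (mu i - lam i) = d)
    (hstep : ∀ i, i < nn → mu i = lam i ∨ (lam i = 0 ∧ ∀ j, i < j → j < nn → mu i ≤ lam j)) :
    IsSerpentine nn d lam mu := by
  refine ⟨hlam, hmu, hle, hsum, fun i j hij hj hij' => ?_, fun i j hij hj hji _ => ?_⟩
  · rcases hstep i (hij.trans hj) with h | ⟨_, h⟩
    · exact h ▸ hij'
    · exact h j hij hj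
  · rcases hstep i (hij.trans hj) with h | ⟨h, _⟩
    · exact h
    · omega

theorem List.getElem_mem_take_of_lt {α : Type*} {l : List α} {s t : ℕ} (hs : s < l.length)
    (hst : s < t) : l[s] ∈ l.take t :=
  List.mem_take_iff_getElem.mpr ⟨s, lt_min hst hs, rfl⟩

namespace IsExec

variable {n : ℕ → ℕ} {m : ℕ} {l : List (ℕ × ℕ)}

theorem isSCorner_getElem (hl : IsExec n m l) (t : ℕ) (ht : t < l.length) :
    IsSCorner n m {i | ∃ c ∈ l.take t, c.1 = i} {j | ∃ c ∈ l.take t, c.2 = j} l[t] :=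
  hl.1 t ht

theorem fst_lt_of_mem (hl : IsExec n m l) {c : ℕ × ℕ} (hc : c ∈ l) : c.1 < n c.2 := by
  obtain ⟨t, ht, rfl⟩ := List.mem_iff_getElem.mp hc
  exact (hl.isSCorner_getElem t ht).2.1

theorem eq_of_fst_eq (hl : IsExec n m l) {c c' : ℕ × ℕ} (hc : c ∈ l) (hc' : c' ∈ l)
    (h : c.1 = c'.1) : c = c' := by
  obtain ⟨t, ht, rfl⟩ := List.mem_iff_getElem.mp hc
  obtain ⟨t', ht', rfl⟩ := List.mem_iff_getElem.mp hc'
  rcases lt_trichotomy t t' with hlt | rfl | hlt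
  · exact absurd ⟨l[t], List.getElem_mem_take_of_lt ht hlt, h⟩ (hl.isSCorner_getElem t' ht').2.2.1
  · rfl
  · exact absurd ⟨l[t'], List.getElem_mem_take_of_lt ht' hlt, h.symm⟩
      (hl.isSCorner_getElem t ht).2.2.1

theorem exists_mem_of_lt_of_lt (hl : IsExec n m l) {i j a : ℕ} (hij : i < j) (hj : j < n a)
    (h : (i, a) ∈ l) : ∃ b < a, (j, b) ∈ l := by
  obtain ⟨t, ht, hget⟩ := List.mem_iff_getElem.mp h
  have hcor := hl.isSCorner_getElem t ht
  rw [hget] at hcor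
  -- row `j` is below the corner `(i, a)` in its column, so it was deleted earlier, by some `c`
  obtain ⟨c, hc, rfl⟩ := hcor.2.2.2.2.1 j hij hj
  obtain ⟨s, hs, hsc⟩ := List.mem_take_iff_getElem.mp hc
  have hcor' := hl.isSCorner_getElem s (lt_min_iff.mp hs).2
  rw [hsc] at hcor'
  have ha : a ∉ {j | ∃ c ∈ l.take t, c.2 = j} := hcor.2.2.2.1
  refine ⟨c.2, ?_, List.mem_of_mem_take hc⟩
  have hne : c.2 ≠ a := fun hca => ha ⟨c, hc, hca⟩
  -- column `a` was still present when `c` was recorded, yet reaches below row `c.1`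
  have hnlt : ¬ a < c.2 := fun hac => absurd (hcor'.2.2.2.2.2 a hac fun ⟨e, he, hea⟩ =>
    ha ⟨e, List.take_subset_take_left l (lt_min_iff.mp hs).1.le he, hea⟩) (not_le.mpr hj)
  omega

end IsExec

namespace DLDense

variable {n : ℕ → ℕ} {m : ℕ} {l : List (ℕ × ℕ)} {R : ℕ × ℕ → ℕ}

theorem mem_of_ne_zero (hR : DLDense {c | c ∈ l} R) {c : ℕ × ℕ} (hc : R c ≠ 0) : c ∈ l :=
  by_contra fun h => hc (hR.1 c h)

theorem eq_zero_of_le (hl : IsExec n m l) (hR : DLDense {c | c ∈ l} R) {i b : ℕ}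
    (hi : n b ≤ i) : R (i, b) = 0 :=
  by_contra fun h => absurd (hl.fst_lt_of_mem (hR.mem_of_ne_zero h)) (not_lt.mpr hi)

theorem sum_range_eq_zero_of_ne_zero (hl : IsExec n m l) (hR : DLDense {c | c ∈ l} R)
    {i a : ℕ} (hia : R (i, a) ≠ 0) : ∑ b ∈ range a, R (i, b) = 0 :=
  sum_eq_zero fun _ hb => by_contra fun h => (mem_range.mp hb).ne
    (congrArg Prod.snd (hl.eq_of_fst_eq (hR.mem_of_ne_zero h) (hR.mem_of_ne_zero hia) rfl))

theorem le_sum_range_of_lt_of_lt (hl : IsExec n m l) (hR : DLDense {c | c ∈ l} R)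
    {i j a : ℕ} (hia : R (i, a) ≠ 0) (hij : i < j) (hj : j < n a) :
    R (i, a) ≤ ∑ b ∈ range a, R (j, b) := by
  have hmem := hR.mem_of_ne_zero hia
  obtain ⟨b, hba, hjb⟩ := hl.exists_mem_of_lt_of_lt hij hj hmem
  calc R (i, a) ≤ R (j, b) := hR.2 _ _ hmem hjb ⟨hij.le, hba.le⟩
    _ ≤ ∑ b ∈ range a, R (j, b) :=
      single_le_sum (f := fun b => R (j, b)) (fun _ _ => Nat.zero_le _) (mem_range.mpr hba)

end DLDense

theorem dl_dense_gives_serpentines_general (m : ℕ) (n : ℕ → ℕ)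
    (hmono : ∀ j k, j ≤ k → k < m → n j ≤ n k)
    (S : Set (ℕ × ℕ)) (hS : IsScSet n m S)
    (R : ℕ × ℕ → ℕ) (hR : DLDense S R) :
    ∀ a, a < m →
      IsSerpentine (n a) (vrtW n R a)
        (fun i => ∑ b ∈ Finset.range a, R (i, b))
        (fun i => ∑ b ∈ Finset.range (a + 1), R (i, b)) := by
  obtain ⟨l, hl, rfl⟩ := hS
  intro a ha
  have hvanish : ∀ c ≤ a + 1, ∀ i, n a ≤ i → ∑ b ∈ range c, R (i, b) = 0 := fun c hc i hi =>
    sum_eq_zero fun b hb => hR.eq_zero_of_le hl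
      ((hmono b a (by have := mem_range.mp hb; omega) ha).trans hi)
  refine isSerpentine_of_eq_or_le (hvanish a a.le_succ) (hvanish (a + 1) le_rfl)
    (fun i => by simp only [sum_range_succ, Nat.le_add_right]) ?_ fun i _ => ?_
  · simp only [sum_range_succ, add_tsub_cancel_left, vrtW]
  · by_cases hia : R (i, a) = 0
    · exact Or.inl (by simp only [sum_range_succ, hia, add_zero])
    · have hzero := hR.sum_range_eq_zero_of_ne_zero hl hia
      refine Or.inr ⟨hzero, fun j hij hj => ?_⟩
      simpa only [sum_range_succ, hzero, zero_add] using hR.le_sum_range_of_lt_of_lt hl hia hij hj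

/-- Lemma 1.21.  For a DL-dense array `R` with column sums
`d_j = vrt(R)_j`, the column-wise partial sums `μ⁽ʲ⁾_i = Σ_{a<j} R_{i,a}` form a
chain of iterated serpentines: `μ⁽ʲ⁺¹⁾ ∈ Ser^{n_j}_{d_j, μ⁽ʲ⁾}`. -/
theorem dl_dense_gives_serpentines (m : ℕ) (hm : 0 < m)
    (n : ℕ → ℕ) (hn0 : 0 < n 0)
    (hmono : ∀ j k, j ≤ k → k < m → n j ≤ n k)
    (S : Set (ℕ × ℕ)) (hS : IsScSet n m S)
    (R : ℕ × ℕ → ℕ) (hR : DLDense S R) :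
    ∀ a, a < m →
      IsSerpentine (n a) (vrtW n R a)
        (fun i => ∑ b ∈ Finset.range a, R (i, b))
        (fun i => ∑ b ∈ Finset.range (a + 1), R (i, b)) :=
  dl_dense_gives_serpentines_general m n hmono S hS R hR
end
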